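/- arXiv:2402.04067 — 6 statements merged into one kernel-verified Lean document; each statement's English description precedes it below -/
import Mathlib

section
/- Let n be an odd positive integer with prime factorization n = p_1^{J_1} p_2^{J_2} ··· p_s^{J_s}, where s ≥ 2, p_1 < p_2 < ··· < p_s are odd primes, each J_i ≥ 1, and for every r ∈ {1,...,s-1} one has ∏_{i=1}^{r} p_i^{J_i} < p_{r+1}. Let D_1 and D_2 be sets of divisors of n with n ∉ D_1 and n ∉ D_2. If the integral circulant graphs ICG(n,D_1) and ICG(n,D_2) are isospectral, then D_1 = D_2. -/
open Finset

/-- `ω_n = exp(2πi/n)`. -/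
noncomputable def omegaN (n : ℕ) : ℂ := Complex.exp (2 * Real.pi * Complex.I / n)

/-- `λ_k(S) = ∑_{g ∈ S} ω_n^{k g}`, the eigenvalues of the circulant graph `Cay(ℤ_n, S)`. -/
noncomputable def lam (n : ℕ) (S : Finset ℕ) (k : ℕ) : ℂ :=
  ∑ g ∈ S, omegaN n ^ (k * g)

/-- The spectrum of `Cay(ℤ_n, S)`, i.e. the multiset `(λ_k(S))_{k ∈ [n]}`. -/
noncomputable def spec (n : ℕ) (S : Finset ℕ) : Multiset ℂ :=
  (Finset.Icc 1 n).val.map (lam n S)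

/-- The connection set of `ICG(n, D)`:
`⋃_{d ∈ D} G_n(d) = {j ∈ [n] : gcd(j,n) ∈ D}` where `G_n(d) = {j ∈ [n] : gcd(j,n) = d}`. -/
def connSet (n : ℕ) (D : Finset ℕ) : Finset ℕ :=
  (Finset.Icc 1 n).filter (fun j => Nat.gcd j n ∈ D)


open scoped Nat symmDiff

/-!
Isospectral circulant graphs have connection sets of equal size, since `|S|` is the largest
modulus of an eigenvalue of `Cay(ℤ_n, S)` (attained at `k = n`). For `ICG(n, D)` this size is
`∑_{d ∈ D} φ(n / d)`. The separation hypothesis makes the totients of the divisors of `n`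
superincreasing: for `n = m p^J` with `m + 1 < p`, the divisors `d p^b` with `d ∣ m` are ordered
lexicographically by `(b, d)`, and `m ∑_{b' < b} φ(p^{b'}) < φ(p^b)`. Distinct sets of terms of a
superincreasing sequence have distinct sums, so `{n / d : d ∈ D}`, and hence `D`, is determined
by the spectrum.
-/

lemma omegaN_pow_self (n : ℕ) : omegaN n ^ n = 1 := by
  rcases eq_or_ne n 0 with rfl | hn
  · simp
  · exact (Complex.isPrimitiveRoot_exp n hn).pow_eq_one

lemma norm_omegaN (n : ℕ) : ‖omegaN n‖ = 1 := by
  rcases eq_or_ne n 0 with rfl | hn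
  · simp [omegaN]
  · exact (Complex.isPrimitiveRoot_exp n hn).norm'_eq_one hn

lemma lam_self (n : ℕ) (S : Finset ℕ) : lam n S n = #S := by
  simp [lam, pow_mul, omegaN_pow_self]

lemma norm_lam_le (n : ℕ) (S : Finset ℕ) (k : ℕ) : ‖lam n S k‖ ≤ #S := by
  simpa [lam, norm_omegaN] using norm_sum_le S fun g => omegaN n ^ (k * g)

lemma natCast_card_mem_spec {n : ℕ} (hn : n ≠ 0) (S : Finset ℕ) : (#S : ℂ) ∈ spec n S :=
  Multiset.mem_map.2 ⟨n, by simp [Nat.one_le_iff_ne_zero, hn], lam_self n S⟩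

lemma norm_le_card_of_mem_spec {n : ℕ} {S : Finset ℕ} {z : ℂ} (hz : z ∈ spec n S) :
    ‖z‖ ≤ #S := by
  obtain ⟨k, -, rfl⟩ := Multiset.mem_map.1 hz
  exact norm_lam_le n S k

lemma card_le_of_spec_eq {n : ℕ} (hn : n ≠ 0) {S T : Finset ℕ} (h : spec n S = spec n T) :
    #S ≤ #T := by
  have := norm_le_card_of_mem_spec (h ▸ natCast_card_mem_spec hn S)
  exact_mod_cast (Complex.norm_natCast _).symm.trans_le this

lemma card_eq_of_spec_eq {n : ℕ} (hn : n ≠ 0) {S T : Finset ℕ} (h : spec n S = spec n T) :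
    #S = #T :=
  (card_le_of_spec_eq hn h).antisymm (card_le_of_spec_eq hn h.symm)

lemma connSet_eq_filter_range {n : ℕ} {D : Finset ℕ} (hnD : n ∉ D) :
    connSet n D = (range n).filter (fun j => Nat.gcd j n ∈ D) := by
  ext j
  simp only [connSet, mem_filter, mem_Icc, mem_range]
  constructor
  · rintro ⟨⟨-, hjn⟩, hj⟩
    refine ⟨hjn.lt_of_ne ?_, hj⟩
    rintro rfl
    exact hnD (by rwa [Nat.gcd_self] at hj)
  · rintro ⟨hjn, hj⟩
    refine ⟨⟨Nat.one_le_iff_ne_zero.2 ?_, hjn.le⟩, hj⟩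
    rintro rfl
    exact hnD (by rwa [Nat.gcd_zero_left] at hj)

lemma card_connSet {n : ℕ} {D : Finset ℕ} (hD : D ⊆ n.divisors) (hnD : n ∉ D) :
    #(connSet n D) = ∑ d ∈ D, φ (n / d) := by
  have hmaps : Set.MapsTo (Nat.gcd · n) ↑((range n).filter fun j => j.gcd n ∈ D) ↑D :=
    fun _ hj => (mem_filter.1 hj).2
  rw [connSet_eq_filter_range hnD, card_eq_sum_card_fiberwise hmaps]
  refine sum_congr rfl fun d hd => ?_
  rw [Nat.totient_div_of_dvd (Nat.dvd_of_mem_divisors (hD hd)), filter_filter]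
  refine congrArg card (filter_congr fun j _ => ?_)
  rw [Nat.gcd_comm]
  exact and_iff_right_of_imp fun h => h ▸ hd

lemma leftInvOn_div_divisors (n : ℕ) : Set.LeftInvOn (n / ·) (n / ·) n.divisors :=
  fun _ hd => Nat.div_div_self (Nat.dvd_of_mem_divisors hd) (Nat.mem_divisors.1 hd).2

lemma image_div_subset_divisors {n : ℕ} {D : Finset ℕ} (hD : D ⊆ n.divisors) :
    D.image (n / ·) ⊆ n.divisors :=
  (image_subset_image hD).trans (Nat.image_div_divisors_eq_divisors n).subset

lemma sum_image_div {M : Type*} [AddCommMonoid M] {n : ℕ} {D : Finset ℕ} (hD : D ⊆ n.divisors)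
    (f : ℕ → M) : ∑ e ∈ D.image (n / ·), f e = ∑ d ∈ D, f (n / d) :=
  sum_image ((leftInvOn_div_divisors n).mono hD).injOn

lemma image_div_image_div {n : ℕ} {D : Finset ℕ} (hD : D ⊆ n.divisors) :
    (D.image (n / ·)).image (n / ·) = D := by
  rw [image_image]
  exact (image_congr ((leftInvOn_div_divisors n).mono hD)).trans image_id

lemma image_div_injOn (n : ℕ) :
    Set.InjOn (fun D : Finset ℕ => D.image (n / ·)) {D | D ⊆ n.divisors} := fun D₁ h₁ D₂ h₂ h => by
  rw [← image_div_image_div h₁, ← image_div_image_div h₂]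
  exact congrArg _ h

section Superincreasing

variable {α : Type*} [LinearOrder α]

def IsSuperincreasing (f : α → ℕ) (U : Finset α) : Prop :=
  ∀ e ∈ U, ∑ e' ∈ U with e' < e, f e' < f e

variable {f : α → ℕ} {U : Finset α}

theorem IsSuperincreasing.sum_lt_sum (hU : IsSuperincreasing f U) {A B : Finset α}
    (hA : A ⊆ U) (hB : B ⊆ U) {m : α} (hmA : m ∈ A) (hmB : m ∉ B)
    (hmax : ∀ x ∈ B \ A, x ≤ m) : ∑ x ∈ B, f x < ∑ x ∈ A, f x := by
  have hBA : B \ A ⊆ U.filter (· < m) := fun x hx =>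
    mem_filter.2 ⟨hB (mem_sdiff.1 hx).1,
      (hmax x hx).lt_of_ne fun hxm => hmB (hxm ▸ (mem_sdiff.1 hx).1)⟩
  calc ∑ x ∈ B, f x = ∑ x ∈ A ∩ B, f x + ∑ x ∈ B \ A, f x := by
        rw [inter_comm, sum_inter_add_sum_sdiff]
    _ ≤ ∑ x ∈ A ∩ B, f x + ∑ x ∈ U with x < m, f x := by gcongr
    _ < ∑ x ∈ A ∩ B, f x + f m := by gcongr; exact hU m (hA hmA)
    _ ≤ ∑ x ∈ A ∩ B, f x + ∑ x ∈ A \ B, f x := by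
        gcongr; exact single_le_sum (fun _ _ => Nat.zero_le _) (mem_sdiff.2 ⟨hmA, hmB⟩)
    _ = ∑ x ∈ A, f x := sum_inter_add_sum_sdiff A B f

theorem IsSuperincreasing.sum_injOn (hU : IsSuperincreasing f U) :
    Set.InjOn (fun A => ∑ x ∈ A, f x) {A | A ⊆ U} := by
  intro A hA B hB hsum
  by_contra hne
  have hne' : (A ∆ B).Nonempty := symmDiff_nonempty.2 hne
  have hmax : ∀ x ∈ A ∆ B, x ≤ (A ∆ B).max' hne' := fun x hx => le_max' _ x hx
  rcases mem_symmDiff.1 (max'_mem _ hne') with ⟨hmA, hmB⟩ | ⟨hmB, hmA⟩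
  · refine (hU.sum_lt_sum hA hB hmA hmB fun x hx => hmax x ?_).ne hsum.symm
    exact mem_symmDiff.2 (Or.inr (mem_sdiff.1 hx))
  · refine (hU.sum_lt_sum hB hA hmB hmA fun x hx => hmax x ?_).ne hsum
    exact mem_symmDiff.2 (Or.inl (mem_sdiff.1 hx))

end Superincreasing

lemma sum_divisors_mul_prime_pow {M : Type*} [AddCommMonoid M] {m p : ℕ} (J : ℕ)
    (hp : p.Prime) (hmp : m.Coprime p) (F : ℕ → M) :
    ∑ e ∈ (m * p ^ J).divisors, F e = ∑ x ∈ m.divisors ×ˢ range (J + 1), F (x.1 * p ^ x.2) := by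
  rw [Nat.divisors_mul, mul_def, sum_image (hmp.pow_right J).mul_injOn_divisors, sum_product,
    sum_product]
  exact sum_congr rfl fun d _ => Nat.sum_divisors_prime_pow hp

lemma lt_or_eq_and_lt_of_mul_pow_lt {p d d' b b' : ℕ} (hd : d < p) (hd' : 0 < d')
    (h : d' * p ^ b' < d * p ^ b) : b' < b ∨ b' = b ∧ d' < d := by
  rcases lt_trichotomy b' b with hlt | rfl | hgt
  · exact Or.inl hlt
  · exact Or.inr ⟨rfl, Nat.lt_of_mul_lt_mul_right h⟩
  · refine absurd h (not_lt.2 ?_)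
    calc d * p ^ b ≤ p ^ (b + 1) := by rw [pow_succ']; gcongr
      _ ≤ p ^ b' := pow_le_pow_right₀ (by omega) hgt
      _ ≤ d' * p ^ b' := Nat.le_mul_of_pos_left _ hd'

lemma filter_mul_pow_lt_subset {m p d b : ℕ} (J : ℕ) (hdp : d < p) :
    (m.divisors ×ˢ range (J + 1)).filter (fun x => x.1 * p ^ x.2 < d * p ^ b) ⊆
      m.divisors ×ˢ range b ∪ (m.divisors.filter (· < d)) ×ˢ {b} := by
  intro x hx
  obtain ⟨hx, hlt⟩ := mem_filter.1 hx
  have hx1 := (mem_product.1 hx).1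
  rcases lt_or_eq_and_lt_of_mul_pow_lt hdp (Nat.pos_of_mem_divisors hx1) hlt with h | ⟨h, h'⟩
  · exact mem_union_left _ (mem_product.2 ⟨hx1, mem_range.2 h⟩)
  · exact mem_union_right _ (mem_product.2 ⟨mem_filter.2 ⟨hx1, h'⟩, mem_singleton.2 h⟩)

lemma mul_sum_totient_prime_pow_lt {m p : ℕ} (hp : p.Prime) (hmp : m + 1 < p) (b : ℕ) :
    m * ∑ i ∈ range b, φ (p ^ i) < φ (p ^ b) := by
  cases b with
  | zero => simp
  | succ c =>
    rw [← Nat.sum_divisors_prime_pow hp, Nat.sum_totient, Nat.totient_prime_pow_succ hp, mul_comm]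
    exact Nat.mul_lt_mul_of_pos_left (by omega) (pow_pos hp.pos c)

theorem IsSuperincreasing.totient_mul_prime_pow {m p : ℕ} (J : ℕ) (hp : p.Prime)
    (hmp : m + 1 < p) (hm : IsSuperincreasing φ m.divisors) :
    IsSuperincreasing φ (m * p ^ J).divisors := by
  rcases m.eq_zero_or_pos with rfl | hm0
  · simp [IsSuperincreasing]
  have hcop : m.Coprime p :=
    (hp.coprime_iff_not_dvd.2 fun h => (Nat.le_of_dvd hm0 h).not_gt (by omega)).symm
  have htotient : ∀ x ∈ m.divisors ×ˢ range (J + 1), φ (x.1 * p ^ x.2) = φ x.1 * φ (p ^ x.2) :=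
    fun x hx => Nat.totient_mul <|
      (hcop.coprime_dvd_left (Nat.dvd_of_mem_divisors (mem_product.1 hx).1)).pow_right _
  intro e he
  obtain ⟨d, hd, b, hb, rfl⟩ : ∃ d ∈ m.divisors, ∃ b ∈ range (J + 1), d * p ^ b = e := by
    obtain ⟨d, hd, c, hc, rfl⟩ := mem_mul.1 (Nat.divisors_mul m (p ^ J) ▸ he)
    obtain ⟨b, hbJ, rfl⟩ := (Nat.mem_divisors_prime_pow hp J).1 hc
    exact ⟨d, hd, b, mem_range.2 (Nat.lt_succ_of_le hbJ), rfl⟩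
  have hdp : d < p := (Nat.divisor_le hd).trans_lt (by omega)
  set T := ∑ d' ∈ m.divisors with d' < d, φ d'
  calc ∑ e' ∈ (m * p ^ J).divisors with e' < d * p ^ b, φ e'
      = ∑ x ∈ m.divisors ×ˢ range (J + 1) with x.1 * p ^ x.2 < d * p ^ b,
          φ x.1 * φ (p ^ x.2) := by
        rw [sum_filter, sum_divisors_mul_prime_pow J hp hcop, sum_filter]
        exact sum_congr rfl fun x hx => by rw [htotient x hx]
    _ ≤ ∑ x ∈ m.divisors ×ˢ range b ∪ (m.divisors.filter (· < d)) ×ˢ {b},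
          φ x.1 * φ (p ^ x.2) := sum_le_sum_of_subset (filter_mul_pow_lt_subset J hdp)
    _ ≤ ∑ x ∈ m.divisors ×ˢ range b, φ x.1 * φ (p ^ x.2) +
          ∑ x ∈ (m.divisors.filter (· < d)) ×ˢ {b}, φ x.1 * φ (p ^ x.2) :=
        le_self_add.trans_eq sum_union_inter
    _ = m * ∑ i ∈ range b, φ (p ^ i) + T * φ (p ^ b) := by
        simp only [sum_product, sum_singleton, ← sum_mul_sum, ← sum_mul, Nat.sum_totient, T]
    _ < φ (p ^ b) + T * φ (p ^ b) := by
        gcongr; exact mul_sum_totient_prime_pow_lt hp hmp b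
    _ = (T + 1) * φ (p ^ b) := by ring
    _ ≤ φ d * φ (p ^ b) := by gcongr; exact hm d hd
    _ = φ (d * p ^ b) := (htotient (d, b) (mem_product.2 ⟨hd, hb⟩)).symm

theorem isSuperincreasing_totient_divisors_prod {s : ℕ} {p J : ℕ → ℕ}
    (hp : ∀ i < s, (p i).Prime) (hsep : ∀ r < s, ∏ i ∈ range r, p i ^ J i + 1 < p r) :
    IsSuperincreasing φ (∏ i ∈ range s, p i ^ J i).divisors := by
  induction s with
  | zero => simp [IsSuperincreasing]
  | succ s ih =>
    rw [prod_range_succ]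
    exact (ih (fun i hi => hp i (by omega)) fun r hr => hsep r (by omega)).totient_mul_prime_pow _
      (hp s (by omega)) (hsep s (by omega))

theorem so_odd_type_general
    (n s : ℕ) (p J : ℕ → ℕ)
    (hodd : Odd n)
    (hp : ∀ i < s, (p i).Prime ∧ Odd (p i))
    (hfact : n = ∏ i ∈ Finset.range s, p i ^ J i)
    (hsep : ∀ r, 1 ≤ r → r < s → ∏ i ∈ Finset.range r, p i ^ J i < p r)
    (D₁ D₂ : Finset ℕ)
    (hD₁ : D₁ ⊆ n.divisors) (hD₂ : D₂ ⊆ n.divisors)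
    (hn₁ : n ∉ D₁) (hn₂ : n ∉ D₂)
    (hspec : spec n (connSet n D₁) = spec n (connSet n D₂)) :
    D₁ = D₂ := by
  have hgap : ∀ r < s, ∏ i ∈ range r, p i ^ J i + 1 < p r := by
    intro r hr
    have hlt : ∏ i ∈ range r, p i ^ J i < p r := by
      rcases Nat.eq_zero_or_pos r with rfl | hr0
      · simpa using (hp 0 hr).1.one_lt
      · exact hsep r hr0 hr
    -- both sides are odd, so they cannot be consecutive
    obtain ⟨a, ha⟩ : Odd (∏ i ∈ range r, p i ^ J i) :=
      hodd.of_dvd_nat (hfact ▸ prod_dvd_prod_of_subset _ _ _ (range_subset_range.2 hr.le))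
    obtain ⟨c, hc⟩ := (hp r hr).2
    omega
  have hSI : IsSuperincreasing φ n.divisors :=
    hfact ▸ isSuperincreasing_totient_divisors_prod (fun i hi => (hp i hi).1) hgap
  have hsum : ∑ e ∈ D₁.image (n / ·), φ e = ∑ e ∈ D₂.image (n / ·), φ e := by
    rw [sum_image_div hD₁, sum_image_div hD₂, ← card_connSet hD₁ hn₁, ← card_connSet hD₂ hn₂]
    exact card_eq_of_spec_eq hodd.pos.ne' hspec
  exact image_div_injOn n hD₁ hD₂ <|
    hSI.sum_injOn (image_div_subset_divisors hD₁) (image_div_subset_divisors hD₂) hsum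

/-- So's conjecture for odd `n = p₁^{J₁} ⋯ p_s^{J_s}` where the partial products satisfy
`∏_{i ≤ r} p_i^{J_i} < p_{r+1}`. -/
theorem so_odd_type
    (n s : ℕ) (p J : ℕ → ℕ)
    (hodd : Odd n) (hs : 2 ≤ s)
    (hp : ∀ i < s, (p i).Prime ∧ Odd (p i))
    (hJ : ∀ i < s, 1 ≤ J i)
    (hmono : ∀ i j, i < j → j < s → p i < p j)
    (hfact : n = ∏ i ∈ Finset.range s, p i ^ J i)
    (hsep : ∀ r, 1 ≤ r → r < s → ∏ i ∈ Finset.range r, p i ^ J i < p r)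
    (D₁ D₂ : Finset ℕ)
    (hD₁ : D₁ ⊆ n.divisors) (hD₂ : D₂ ⊆ n.divisors)
    (hn₁ : n ∉ D₁) (hn₂ : n ∉ D₂)
    (hspec : spec n (connSet n D₁) = spec n (connSet n D₂)) :
    D₁ = D₂ :=
  so_odd_type_general n s p J hodd hp hfact hsep D₁ D₂ hD₁ hD₂ hn₁ hn₂ hspec
end

section
/- Set n = 2^3 · 3 = 24. Let D_1 and D_2 be sets of divisors of n with n ∉ D_1 and n ∉ D_2. If the integral circulant graphs ICG(n,D_1) and ICG(n,D_2) are isospectral, then D_1 = D_2. -/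
open Finset

/- ---------- auxiliary material ---------- -/

def bI (m k : ℕ) : ℤ := if m ∣ k then (m : ℤ) else 0

/-- Ramanujan sum table: `LL d k = c_{24/d}(k)` for divisors `d` of 24. -/
def LL (d k : ℕ) : ℤ :=
  if d = 1 then bI 24 k - bI 12 k - bI 8 k + bI 4 k
  else if d = 2 then bI 12 k - bI 6 k - bI 4 k + bI 2 k
  else if d = 3 then bI 8 k - bI 4 k
  else if d = 4 then bI 6 k - bI 3 k - bI 2 k + bI 1 k
  else if d = 6 then bI 4 k - bI 2 k
  else if d = 8 then bI 3 k - bI 1 k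
  else if d = 12 then bI 2 k - bI 1 k
  else 0

noncomputable def bC (m k : ℕ) : ℂ := if m ∣ k then (m : ℂ) else 0

lemma bI_cast (m k : ℕ) : ((bI m k : ℤ) : ℂ) = bC m k := by
  unfold bI bC; split_ifs <;> simp

lemma omega24_prim : IsPrimitiveRoot (omegaN 24) 24 := by
  have h := Complex.isPrimitiveRoot_exp 24 (by norm_num)
  unfold omegaN
  convert h using 3 <;> norm_num

/-- Geometric sum over the multiples of a divisor `m` of 24. -/
lemma gsum_eq (m : ℕ) (hm : m ∣ 24) (hm0 : 0 < m) (k : ℕ) :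
    ∑ g ∈ (Icc 1 24).filter (fun g => m ∣ g), omegaN 24 ^ (k * g) = bC (24 / m) k := by
  set M := 24 / m with hM
  have hMm : m * M = 24 := Nat.mul_div_cancel' hm
  have hM0 : 0 < M := Nat.div_pos (Nat.le_of_dvd (by norm_num) hm) hm0
  have himg : (Icc 1 24).filter (fun g => m ∣ g) = (Icc 1 M).image (fun j => m * j) := by
    ext g
    simp only [mem_filter, mem_Icc, mem_image]
    constructor
    · rintro ⟨⟨h1, h2⟩, c, rfl⟩
      refine ⟨c, ⟨Nat.pos_of_ne_zero (by rintro rfl; simp at h1), ?_⟩, rfl⟩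
      rw [← hMm] at h2
      exact Nat.le_of_mul_le_mul_left h2 hm0
    · rintro ⟨j, ⟨hj1, hj2⟩, rfl⟩
      refine ⟨⟨Nat.mul_pos hm0 hj1, ?_⟩, j, rfl⟩
      calc m * j ≤ m * M := Nat.mul_le_mul_left m hj2
        _ = 24 := hMm
  rw [himg, Finset.sum_image (fun a _ b _ h => Nat.eq_of_mul_eq_mul_left hm0 h)]
  have hpow : ∀ j, omegaN 24 ^ (k * (m * j)) = (omegaN 24 ^ (k * m)) ^ j := by
    intro j; rw [← pow_mul, mul_assoc]
  simp only [hpow]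
  set x := omegaN 24 ^ (k * m) with hx
  have hxM : x ^ M = 1 := by
    rw [hx, ← pow_mul, mul_assoc, hMm, mul_comm k 24, pow_mul, omega24_prim.pow_eq_one, one_pow]
  by_cases hk : M ∣ k
  · obtain ⟨t, rfl⟩ := hk
    have hexp : M * t * m = 24 * t := by rw [mul_right_comm, mul_comm M m, hMm]
    have hx1 : x = 1 := by
      rw [hx, hexp, pow_mul, omega24_prim.pow_eq_one, one_pow]
    have hdvd : M ∣ M * t := dvd_mul_right M t
    simp [bC, hx1, hdvd, ← hM]
  · have hx1 : x ≠ 1 := by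
      intro h
      rw [hx, omega24_prim.pow_eq_one_iff_dvd] at h
      obtain ⟨t, ht⟩ := h
      have hkm : m * k = m * (M * t) := by rw [mul_comm m k, ht, ← hMm, mul_assoc]
      exact hk ⟨t, Nat.eq_of_mul_eq_mul_left hm0 hkm⟩
    have hgeo : ∑ i ∈ range M, x ^ i = 0 := by
      rw [geom_sum_eq hx1 M, hxM, sub_self, zero_div]
    have hicc : Icc 1 M = (range M).image Nat.succ := by
      ext g
      simp only [mem_Icc, mem_image, mem_range]
      constructor
      · rintro ⟨h1, h2⟩; exact ⟨g - 1, by omega, by omega⟩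
      · rintro ⟨j, hj, rfl⟩; omega
    rw [hicc, Finset.sum_image (fun a _ b _ h => Nat.succ_injective h)]
    have hs : ∀ j, x ^ Nat.succ j = x * x ^ j := fun j => pow_succ' x j
    simp only [hs, ← Finset.mul_sum, hgeo, mul_zero]
    simp [bC, hk, ← hM]

lemma Gsum_eq (d : ℕ) (hd : d ∈ ({1, 2, 3, 4, 6, 8, 12} : Finset ℕ)) (k : ℕ) :
    ∑ g ∈ (Icc 1 24).filter (fun g => Nat.gcd g 24 = d), omegaN 24 ^ (k * g)
      = ((LL d k : ℤ) : ℂ) := by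
  have h1 : ∑ g ∈ (Icc 1 24).filter (fun g => 1 ∣ g), omegaN 24 ^ (k * g) = bC 24 k :=
    gsum_eq 1 (by norm_num) (by norm_num) k
  have h2 : ∑ g ∈ (Icc 1 24).filter (fun g => 2 ∣ g), omegaN 24 ^ (k * g) = bC 12 k :=
    gsum_eq 2 (by norm_num) (by norm_num) k
  have h3 : ∑ g ∈ (Icc 1 24).filter (fun g => 3 ∣ g), omegaN 24 ^ (k * g) = bC 8 k :=
    gsum_eq 3 (by norm_num) (by norm_num) k
  have h4 : ∑ g ∈ (Icc 1 24).filter (fun g => 4 ∣ g), omegaN 24 ^ (k * g) = bC 6 k :=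
    gsum_eq 4 (by norm_num) (by norm_num) k
  have h6 : ∑ g ∈ (Icc 1 24).filter (fun g => 6 ∣ g), omegaN 24 ^ (k * g) = bC 4 k :=
    gsum_eq 6 (by norm_num) (by norm_num) k
  have h8 : ∑ g ∈ (Icc 1 24).filter (fun g => 8 ∣ g), omegaN 24 ^ (k * g) = bC 3 k :=
    gsum_eq 8 (by norm_num) (by norm_num) k
  have h12 : ∑ g ∈ (Icc 1 24).filter (fun g => 12 ∣ g), omegaN 24 ^ (k * g) = bC 2 k :=
    gsum_eq 12 (by norm_num) (by norm_num) k
  have h24 : ∑ g ∈ (Icc 1 24).filter (fun g => 24 ∣ g), omegaN 24 ^ (k * g) = bC 1 k :=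
    gsum_eq 24 (by norm_num) (by norm_num) k
  fin_cases hd
  · -- d = 1
    have e : (Icc 1 24).filter (fun g => Nat.gcd g 24 = 1)
        = ((Icc 1 24).filter (fun g => 1 ∣ g))
          \ (((Icc 1 24).filter (fun g => 2 ∣ g)) ∪ ((Icc 1 24).filter (fun g => 3 ∣ g))) := by
      decide
    have hsub : (((Icc 1 24).filter (fun g => 2 ∣ g)) ∪ ((Icc 1 24).filter (fun g => 3 ∣ g)))
        ⊆ ((Icc 1 24).filter (fun g => 1 ∣ g)) := by decide
    have hui := Finset.sum_union_inter (s₁ := (Icc 1 24).filter (fun g => 2 ∣ g))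
      (s₂ := (Icc 1 24).filter (fun g => 3 ∣ g)) (f := fun g => omegaN 24 ^ (k * g))
    have hint : ((Icc 1 24).filter (fun g => 2 ∣ g)) ∩ ((Icc 1 24).filter (fun g => 3 ∣ g))
        = (Icc 1 24).filter (fun g => 6 ∣ g) := by decide
    rw [hint] at hui
    have hRL : ((LL 1 k : ℤ) : ℂ) = bC 24 k - bC 12 k - bC 8 k + bC 4 k := by
      simp only [LL]; norm_num; push_cast
      rw [bI_cast, bI_cast, bI_cast, bI_cast]
    rw [e, Finset.sum_sdiff_eq_sub hsub, hRL]
    linear_combination h1 - h2 - h3 + h6 - hui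
  · -- d = 2
    have e : (Icc 1 24).filter (fun g => Nat.gcd g 24 = 2)
        = ((Icc 1 24).filter (fun g => 2 ∣ g))
          \ (((Icc 1 24).filter (fun g => 4 ∣ g)) ∪ ((Icc 1 24).filter (fun g => 6 ∣ g))) := by
      decide
    have hsub : (((Icc 1 24).filter (fun g => 4 ∣ g)) ∪ ((Icc 1 24).filter (fun g => 6 ∣ g)))
        ⊆ ((Icc 1 24).filter (fun g => 2 ∣ g)) := by decide
    have hui := Finset.sum_union_inter (s₁ := (Icc 1 24).filter (fun g => 4 ∣ g))
      (s₂ := (Icc 1 24).filter (fun g => 6 ∣ g)) (f := fun g => omegaN 24 ^ (k * g))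
    have hint : ((Icc 1 24).filter (fun g => 4 ∣ g)) ∩ ((Icc 1 24).filter (fun g => 6 ∣ g))
        = (Icc 1 24).filter (fun g => 12 ∣ g) := by decide
    rw [hint] at hui
    have hRL : ((LL 2 k : ℤ) : ℂ) = bC 12 k - bC 6 k - bC 4 k + bC 2 k := by
      simp only [LL]; norm_num; push_cast
      rw [bI_cast, bI_cast, bI_cast, bI_cast]
    rw [e, Finset.sum_sdiff_eq_sub hsub, hRL]
    linear_combination h2 - h4 - h6 + h12 - hui
  · -- d = 3
    have e : (Icc 1 24).filter (fun g => Nat.gcd g 24 = 3)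
        = ((Icc 1 24).filter (fun g => 3 ∣ g)) \ ((Icc 1 24).filter (fun g => 6 ∣ g)) := by
      decide
    have hsub : ((Icc 1 24).filter (fun g => 6 ∣ g)) ⊆ ((Icc 1 24).filter (fun g => 3 ∣ g)) := by
      decide
    have hRL : ((LL 3 k : ℤ) : ℂ) = bC 8 k - bC 4 k := by
      simp only [LL]; norm_num; push_cast
      rw [bI_cast, bI_cast]
    rw [e, Finset.sum_sdiff_eq_sub hsub, hRL]
    linear_combination h3 - h6
  · -- d = 4
    have e : (Icc 1 24).filter (fun g => Nat.gcd g 24 = 4)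
        = ((Icc 1 24).filter (fun g => 4 ∣ g))
          \ (((Icc 1 24).filter (fun g => 8 ∣ g)) ∪ ((Icc 1 24).filter (fun g => 12 ∣ g))) := by
      decide
    have hsub : (((Icc 1 24).filter (fun g => 8 ∣ g)) ∪ ((Icc 1 24).filter (fun g => 12 ∣ g)))
        ⊆ ((Icc 1 24).filter (fun g => 4 ∣ g)) := by decide
    have hui := Finset.sum_union_inter (s₁ := (Icc 1 24).filter (fun g => 8 ∣ g))
      (s₂ := (Icc 1 24).filter (fun g => 12 ∣ g)) (f := fun g => omegaN 24 ^ (k * g))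
    have hint : ((Icc 1 24).filter (fun g => 8 ∣ g)) ∩ ((Icc 1 24).filter (fun g => 12 ∣ g))
        = (Icc 1 24).filter (fun g => 24 ∣ g) := by decide
    rw [hint] at hui
    have hRL : ((LL 4 k : ℤ) : ℂ) = bC 6 k - bC 3 k - bC 2 k + bC 1 k := by
      simp only [LL]; norm_num; push_cast
      rw [bI_cast, bI_cast, bI_cast, bI_cast]
    rw [e, Finset.sum_sdiff_eq_sub hsub, hRL]
    linear_combination h4 - h8 - h12 + h24 - hui
  · -- d = 6
    have e : (Icc 1 24).filter (fun g => Nat.gcd g 24 = 6)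
        = ((Icc 1 24).filter (fun g => 6 ∣ g)) \ ((Icc 1 24).filter (fun g => 12 ∣ g)) := by
      decide
    have hsub : ((Icc 1 24).filter (fun g => 12 ∣ g)) ⊆ ((Icc 1 24).filter (fun g => 6 ∣ g)) := by
      decide
    have hRL : ((LL 6 k : ℤ) : ℂ) = bC 4 k - bC 2 k := by
      simp only [LL]; norm_num; push_cast
      rw [bI_cast, bI_cast]
    rw [e, Finset.sum_sdiff_eq_sub hsub, hRL]
    linear_combination h6 - h12
  · -- d = 8
    have e : (Icc 1 24).filter (fun g => Nat.gcd g 24 = 8)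
        = ((Icc 1 24).filter (fun g => 8 ∣ g)) \ ((Icc 1 24).filter (fun g => 24 ∣ g)) := by
      decide
    have hsub : ((Icc 1 24).filter (fun g => 24 ∣ g)) ⊆ ((Icc 1 24).filter (fun g => 8 ∣ g)) := by
      decide
    have hRL : ((LL 8 k : ℤ) : ℂ) = bC 3 k - bC 1 k := by
      simp only [LL]; norm_num; push_cast
      rw [bI_cast, bI_cast]
    rw [e, Finset.sum_sdiff_eq_sub hsub, hRL]
    linear_combination h8 - h24
  · -- d = 12
    have e : (Icc 1 24).filter (fun g => Nat.gcd g 24 = 12)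
        = ((Icc 1 24).filter (fun g => 12 ∣ g)) \ ((Icc 1 24).filter (fun g => 24 ∣ g)) := by
      decide
    have hsub : ((Icc 1 24).filter (fun g => 24 ∣ g)) ⊆ ((Icc 1 24).filter (fun g => 12 ∣ g)) := by
      decide
    have hRL : ((LL 12 k : ℤ) : ℂ) = bC 2 k - bC 1 k := by
      simp only [LL]; norm_num; push_cast
      rw [bI_cast, bI_cast]
    rw [e, Finset.sum_sdiff_eq_sub hsub, hRL]
    linear_combination h12 - h24

lemma lam_eq (D : Finset ℕ) (hD : D ⊆ ({1, 2, 3, 4, 6, 8, 12} : Finset ℕ)) (k : ℕ) :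
    lam 24 (connSet 24 D) k = ((∑ d ∈ D, LL d k : ℤ) : ℂ) := by
  unfold lam connSet
  rw [← Finset.sum_fiberwise_of_maps_to (t := D) (g := fun g => Nat.gcd g 24)
    (fun g hg => (Finset.mem_filter.mp hg).2) (fun g => omegaN 24 ^ (k * g))]
  push_cast
  refine Finset.sum_congr rfl (fun d hd => ?_)
  rw [Finset.filter_filter]
  have hff : (Icc 1 24).filter (fun g => Nat.gcd g 24 ∈ D ∧ Nat.gcd g 24 = d)
      = (Icc 1 24).filter (fun g => Nat.gcd g 24 = d) := by
    apply Finset.filter_congr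
    intro g _
    exact ⟨fun h => h.2, fun h => ⟨h ▸ hd, h⟩⟩
  rw [hff]
  exact Gsum_eq d (hD hd) k

set_option maxRecDepth 100000 in
set_option maxHeartbeats 1000000 in
lemma key_nodup : ((({1, 2, 3, 4, 6, 8, 12} : Finset ℕ).powerset.val).map
    (fun E => ((((Icc 1 24).val.map (fun k => ∑ d ∈ E, LL d k)).map (fun x => x ^ 3)).sum,
               (((Icc 1 24).val.map (fun k => ∑ d ∈ E, LL d k)).map (fun x => x ^ 4)).sum))).Nodup := by
  decide

/-- So's conjecture for `n = 2³ · 3 = 24`. -/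
theorem so_24
    (n : ℕ) (hn : n = 2 ^ 3 * 3)
    (D₁ D₂ : Finset ℕ)
    (hD₁ : D₁ ⊆ n.divisors) (hD₂ : D₂ ⊆ n.divisors)
    (hn₁ : n ∉ D₁) (hn₂ : n ∉ D₂)
    (hspec : spec n (connSet n D₁) = spec n (connSet n D₂)) :
    D₁ = D₂ := by
  have hn24 : n = 24 := by omega
  subst hn24
  have hdiv : (24 : ℕ).divisors = {1, 2, 3, 4, 6, 8, 12, 24} := by decide
  have hsub : ∀ (D : Finset ℕ), D ⊆ (24 : ℕ).divisors → 24 ∉ D →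
      D ⊆ ({1, 2, 3, 4, 6, 8, 12} : Finset ℕ) := by
    intro D hD hnD d hd
    have h1 : d ∈ ({1, 2, 3, 4, 6, 8, 12, 24} : Finset ℕ) := hdiv ▸ hD hd
    have h2 : d ≠ 24 := fun h => hnD (h ▸ hd)
    simp only [mem_insert, mem_singleton] at h1 ⊢
    omega
  have hs₁ := hsub D₁ hD₁ hn₁
  have hs₂ := hsub D₂ hD₂ hn₂
  have hrw : ∀ (D : Finset ℕ), D ⊆ ({1, 2, 3, 4, 6, 8, 12} : Finset ℕ) →
      spec 24 (connSet 24 D) = Multiset.map (fun z : ℤ => (z : ℂ))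
        ((Icc 1 24).val.map (fun k => ∑ d ∈ D, LL d k)) := by
    intro D hD
    unfold spec
    rw [Multiset.map_map]
    exact Multiset.map_congr rfl (fun k _ => lam_eq D hD k)
  rw [hrw D₁ hs₁, hrw D₂ hs₂] at hspec
  have hint : ((Icc 1 24).val.map (fun k => ∑ d ∈ D₁, LL d k))
      = ((Icc 1 24).val.map (fun k => ∑ d ∈ D₂, LL d k)) :=
    Multiset.map_injective (fun a b h => by exact_mod_cast h) hspec
  have hpair : ((((Icc 1 24).val.map (fun k => ∑ d ∈ D₁, LL d k)).map (fun x => x ^ 3)).sum,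
        (((Icc 1 24).val.map (fun k => ∑ d ∈ D₁, LL d k)).map (fun x => x ^ 4)).sum)
      = ((((Icc 1 24).val.map (fun k => ∑ d ∈ D₂, LL d k)).map (fun x => x ^ 3)).sum,
        (((Icc 1 24).val.map (fun k => ∑ d ∈ D₂, LL d k)).map (fun x => x ^ 4)).sum) := by
    rw [hint]
  exact Multiset.inj_on_of_nodup_map key_nodup D₁
    (Finset.mem_val.mpr (Finset.mem_powerset.mpr hs₁)) D₂
    (Finset.mem_val.mpr (Finset.mem_powerset.mpr hs₂)) hpair
end

section
/- Let p and q be primes with 3 ≤ p < q and set n = p^2 q^2. Let D_1 and D_2 be sets of divisors of n with n ∉ D_1 and n ∉ D_2. If the integral circulant graphs ICG(n,D_1) and ICG(n,D_2) are isospectral, then D_1 = D_2. -/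
open Finset

/-!
Every eigenvalue of `ICG(n, D)` is the integer `λ_D(k) = ∑_{d ∈ D} c_{n/d}(k)`, a sum of Ramanujan
sums. Let `n = r²s²` with distinct odd primes `r, s` and `δ = 1_{D₁} - 1_{D₂}`. Modulo `r`,
`λ_D(k)` only depends on `gcd(k, s²) ∈ {1, s, s²}`, values taken `r²s(s-1)`, `r²(s-1)`, `r²` times;
each of these multiplicities exceeds the sum of the later ones, so equal spectra give
`λ_{D₁}(s^b) ≡ λ_{D₂}(s^b) (mod r)` for `b ≤ 2`. The matrix `(c_{s^(2-j)}(s^b))` is invertible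
modulo `r`, and differences of values of `δ` lie in `[-2, 2]` with `2 < r`; this yields
`δ(r²s^j) = δ(rs^j)`. Then the eigenvalues at `1, s, s²` agree exactly, and the same argument
modulo `r²` on the multiples of `r` yields `δ(rs^j) = δ(s^j)`. So `δ(r^i s^j)` does not depend
on `i`; exchanging `r` and `s`, `δ` is constant on the divisors of `n`, and `δ(n) = 0`.
-/

open ArithmeticFunction
open scoped ArithmeticFunction.Moebius

lemma mul_dvd_iff_of_coprime {a b k : ℕ} (hab : a.Coprime b) : a * b ∣ k ↔ a ∣ k ∧ b ∣ k :=
  ⟨fun h => ⟨(dvd_mul_right a b).trans h, (dvd_mul_left b a).trans h⟩,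
    fun h => hab.mul_dvd_of_dvd_of_dvd h.1 h.2⟩

def dvdId (k : ℕ) : ArithmeticFunction ℤ := ⟨fun w => if w ∣ k then w else 0, by simp⟩

lemma dvdId_apply (k w : ℕ) : dvdId k w = if w ∣ k then (w : ℤ) else 0 := rfl

lemma isMultiplicative_dvdId (k : ℕ) : (dvdId k).IsMultiplicative := by
  refine ⟨by simp [dvdId_apply], fun {x y} hxy => ?_⟩
  simp only [dvdId_apply, mul_dvd_iff_of_coprime hxy]
  split_ifs <;> simp_all

/-- The Ramanujan sum `c_m(k) = ∑_{u ∣ m} μ(u) [m/u ∣ k] m/u`, which is the value of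
`∑_{t ∈ [1,m], (t,m) = 1} ω_m^{kt}` (`sum_coprime_omegaN_pow`). -/
def ramanujanSum (m k : ℕ) : ℤ := (μ * dvdId k) m

lemma ramanujanSum_eq_sum (m k : ℕ) :
    ramanujanSum m k = ∑ u ∈ m.divisors, μ u * dvdId k (m / u) := by
  rw [ramanujanSum, mul_apply, Nat.sum_divisorsAntidiagonal (fun u v => μ u * dvdId k v)]

lemma ramanujanSum_mul {a b : ℕ} (hab : a.Coprime b) (k : ℕ) :
    ramanujanSum (a * b) k = ramanujanSum a k * ramanujanSum b k :=
  (isMultiplicative_moebius.mul (isMultiplicative_dvdId k)).map_mul_of_coprime hab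

@[simp] lemma ramanujanSum_one (k : ℕ) : ramanujanSum 1 k = 1 :=
  (isMultiplicative_moebius.mul (isMultiplicative_dvdId k)).map_one

lemma ramanujanSum_prime_pow_succ {p : ℕ} (hp : p.Prime) (e k : ℕ) :
    ramanujanSum (p ^ (e + 1)) k = dvdId k (p ^ (e + 1)) - dvdId k (p ^ e) := by
  rw [ramanujanSum_eq_sum, Nat.sum_divisors_prime_pow hp, sum_range_succ', sum_range_succ']
  have hvanish : ∀ i ∈ range e, μ (p ^ (i + 1 + 1)) = 0 := fun i _ =>
    by rw [moebius_apply_prime_pow hp (by omega), if_neg (by omega)]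
  have hdiv : p ^ (e + 1) / p = p ^ e := by rw [pow_succ, Nat.mul_div_cancel _ hp.pos]
  rw [sum_eq_zero (fun i hi => by rw [hvanish i hi, zero_mul])]
  simp [moebius_apply_prime hp, hdiv, sub_eq_neg_add]

lemma ramanujanSum_mul_right_of_coprime {m t : ℕ} (hmt : m.Coprime t) (k : ℕ) :
    ramanujanSum m (k * t) = ramanujanSum m k := by
  simp only [ramanujanSum_eq_sum, dvdId_apply]
  refine sum_congr rfl fun u hu => ?_
  have hcop : (m / u).Coprime t :=
    hmt.coprime_dvd_left (Nat.div_dvd_of_dvd (Nat.dvd_of_mem_divisors hu))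
  simp only [hcop.dvd_mul_right]

/-- The terms of `c_m(k)` indexed by multiples of `P` vanish modulo `P`. -/
lemma intCast_ramanujanSum_eq_gcd {P W m : ℕ} (hW : ∀ w, w ∣ m → ¬ P ∣ w → w ∣ W) (k : ℕ) :
    (ramanujanSum m k : ZMod P) = ramanujanSum m (k.gcd W) := by
  simp only [ramanujanSum_eq_sum, Int.cast_sum, Int.cast_mul]
  refine sum_congr rfl fun u hu => ?_
  have hw : m / u ∣ m := Nat.div_dvd_of_dvd (Nat.dvd_of_mem_divisors hu)
  by_cases hP : P ∣ m / u
  · have h0 : ((m / u : ℕ) : ZMod P) = 0 := (ZMod.natCast_eq_zero_iff _ _).mpr hP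
    simp only [dvdId_apply, Int.cast_ite, Int.cast_natCast, h0, Int.cast_zero, ite_self]
  · have hk : m / u ∣ k ↔ m / u ∣ k.gcd W :=
      ⟨fun h => Nat.dvd_gcd h (hW _ hw hP), fun h => h.trans (Nat.gcd_dvd_left k W)⟩
    simp only [dvdId_apply, hk]

lemma ramanujanSum_prime_pow_succ_pow {p : ℕ} (hp : p.Prime) (e b : ℕ) :
    ramanujanSum (p ^ (e + 1)) (p ^ b) =
      (if e + 1 ≤ b then (p : ℤ) ^ (e + 1) else 0) - (if e ≤ b then (p : ℤ) ^ e else 0) := by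
  simp [ramanujanSum_prime_pow_succ hp, dvdId_apply, Nat.pow_dvd_pow_iff_le_right hp.one_lt]

lemma sum_mul_ramanujanSum_prime_pow_apply_one {p : ℕ} (hp : p.Prime) (y : ℕ → ℤ) :
    ∑ i ∈ range 3, y i * ramanujanSum (p ^ (2 - i)) 1 = y 2 - y 1 := by
  have c₁ := ramanujanSum_prime_pow_succ_pow hp 0 0
  have c₂ := ramanujanSum_prime_pow_succ_pow hp 1 0
  norm_num at c₁ c₂
  simp [sum_range_succ, c₁, c₂, sub_eq_neg_add]

lemma sum_mul_ramanujanSum_prime_pow_apply_self {p : ℕ} (hp : p.Prime) (y : ℕ → ℤ) :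
    ∑ i ∈ range 3, y i * ramanujanSum (p ^ (2 - i)) p = y 2 + (p - 1) * y 1 - p * y 0 := by
  have c₁ := ramanujanSum_prime_pow_succ_pow hp 0 1
  have c₂ := ramanujanSum_prime_pow_succ_pow hp 1 1
  norm_num at c₁ c₂
  simp [sum_range_succ, c₁, c₂]
  ring

lemma sum_mul_ramanujanSum_prime_pow_apply_sq {p : ℕ} (hp : p.Prime) (y : ℕ → ℤ) :
    ∑ i ∈ range 3, y i * ramanujanSum (p ^ (2 - i)) (p ^ 2) =
      y 2 + (p - 1) * y 1 + (p ^ 2 - p) * y 0 := by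
  have c₁ := ramanujanSum_prime_pow_succ_pow hp 0 2
  have c₂ := ramanujanSum_prime_pow_succ_pow hp 1 2
  norm_num at c₁ c₂
  simp [sum_range_succ, c₁, c₂]
  ring

/-- Up to row operations, the matrix `(c_{s^(2-j)}(s^b))_{b,j ≤ 2}` is triangular with powers of
`s` on the diagonal, hence invertible modulo any `P` prime to `s`. -/
lemma dvd_of_forall_dvd_sum_ramanujanSum {s : ℕ} (hs : s.Prime) {P : ℤ} (hPs : IsCoprime P s)
    (x : ℕ → ℤ) (h : ∀ b ≤ 2, P ∣ ∑ j ∈ range 3, x j * ramanujanSum (s ^ (2 - j)) (s ^ b))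
    {j : ℕ} (hj : j ≤ 2) : P ∣ x j := by
  have h₀ := h 0 (by norm_num)
  have h₁ := h 1 (by norm_num)
  have h₂ := h 2 le_rfl
  rw [pow_zero, sum_mul_ramanujanSum_prime_pow_apply_one hs] at h₀
  rw [pow_one, sum_mul_ramanujanSum_prime_pow_apply_self hs] at h₁
  rw [sum_mul_ramanujanSum_prime_pow_apply_sq hs] at h₂
  have hx₀ : P ∣ x 0 :=
    (hPs.pow_right (n := 2)).dvd_of_dvd_mul_left ((dvd_sub h₂ h₁).trans (dvd_of_eq (by ring)))
  have hx₁ : P ∣ x 1 := by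
    have hs₁ : P ∣ s * (x 1 - x 0) := (dvd_sub h₁ h₀).trans (dvd_of_eq (by ring))
    simpa using dvd_add (hPs.dvd_of_dvd_mul_left hs₁) hx₀
  have hx₂ : P ∣ x 2 := by simpa using dvd_add h₀ hx₁
  interval_cases j <;> assumption

lemma omegaN_mul_pow {d : ℕ} (hd : d ≠ 0) (m : ℕ) : omegaN (d * m) ^ d = omegaN m := by
  have hd' : (d : ℂ) ≠ 0 := Nat.cast_ne_zero.mpr hd
  rw [omegaN, omegaN, ← Complex.exp_nat_mul, Nat.cast_mul, ← mul_div_assoc,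
    mul_div_mul_left _ _ hd']

lemma sum_Icc_omegaN_pow (m k : ℕ) : ∑ t ∈ Icc 1 m, omegaN m ^ (k * t) = dvdId k m := by
  rcases eq_or_ne m 0 with rfl | hm
  · simp
  have hprim : IsPrimitiveRoot (omegaN m) m := Complex.isPrimitiveRoot_exp m hm
  simp_rw [pow_mul]
  set z := omegaN m ^ k
  have hshift : ∑ t ∈ Icc 1 m, z ^ t = z * ∑ t ∈ range m, z ^ t := by
    simp_rw [mul_sum, ← pow_succ']
    rw [range_eq_Ico, sum_Ico_add' (fun t => z ^ t), zero_add, Ico_add_one_right_eq_Icc]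
  rw [hshift, dvdId_apply]
  split_ifs with hk
  · simp [z, (hprim.pow_eq_one_iff_dvd k).mpr hk]
  · have hz : z ≠ 1 := fun h => hk ((hprim.pow_eq_one_iff_dvd k).mp h)
    have hzm : z ^ m = 1 := by rw [← pow_mul, mul_comm, pow_mul, hprim.pow_eq_one, one_pow]
    rw [geom_sum_eq hz, hzm, sub_self, zero_div, mul_zero, Int.cast_zero]

lemma filter_gcd_mul_eq_image {d m : ℕ} (hd : 0 < d) :
    (Icc 1 (d * m)).filter (fun j => j.gcd (d * m) = d) =
      ((Icc 1 m).filter (fun t => t.Coprime m)).image (d * ·) := by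
  ext j
  simp only [mem_filter, mem_Icc, mem_image]
  constructor
  · rintro ⟨⟨h1, h2⟩, hg⟩
    obtain ⟨t, rfl⟩ : d ∣ j := hg ▸ Nat.gcd_dvd_left _ _
    rw [Nat.gcd_mul_left] at hg
    refine ⟨t, ⟨⟨Nat.pos_of_ne_zero (by rintro rfl; simp at h1), Nat.le_of_mul_le_mul_left h2 hd⟩,
      Nat.eq_of_mul_eq_mul_left hd (hg.trans (mul_one d).symm)⟩, rfl⟩
  · rintro ⟨t, ⟨⟨h1, h2⟩, hc⟩, rfl⟩
    exact ⟨⟨Nat.mul_pos hd h1, Nat.mul_le_mul_left d h2⟩, by rw [Nat.gcd_mul_left, hc, mul_one]⟩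

lemma sum_gcd_eq_omegaN_pow {d : ℕ} (hd : 0 < d) (m k : ℕ) :
    ∑ j ∈ Icc 1 (d * m) with j.gcd (d * m) = d, omegaN (d * m) ^ (k * j) =
      ∑ t ∈ Icc 1 m with t.Coprime m, omegaN m ^ (k * t) := by
  rw [filter_gcd_mul_eq_image hd, sum_image fun _ _ _ _ h => Nat.eq_of_mul_eq_mul_left hd h]
  refine sum_congr rfl fun t _ => ?_
  rw [mul_left_comm, pow_mul, omegaN_mul_pow hd.ne']

lemma sum_divisors_sum_coprime_omegaN_pow {n : ℕ} (hn : 0 < n) (k : ℕ) :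
    ∑ d ∈ n.divisors, ∑ t ∈ Icc 1 d with t.Coprime d, omegaN d ^ (k * t) = dvdId k n := by
  rw [← Nat.sum_div_divisors, ← sum_Icc_omegaN_pow n k,
    ← sum_fiberwise_of_maps_to (s := Icc 1 n) (g := fun j => j.gcd n) (t := n.divisors)
      fun j _ => Nat.mem_divisors.mpr ⟨Nat.gcd_dvd_right j n, hn.ne'⟩]
  refine sum_congr rfl fun d hd => ?_
  have hdn : d ∣ n := Nat.dvd_of_mem_divisors hd
  have hd0 : 0 < d := Nat.pos_of_dvd_of_pos hdn hn
  obtain ⟨m, rfl⟩ := hdn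
  rw [Nat.mul_div_cancel_left _ hd0, sum_gcd_eq_omegaN_pow hd0]

lemma sum_coprime_omegaN_pow (m k : ℕ) :
    ∑ t ∈ Icc 1 m with t.Coprime m, omegaN m ^ (k * t) = ramanujanSum m k := by
  rcases Nat.eq_zero_or_pos m with rfl | hm
  · simp [ramanujanSum]
  have hinv := (sum_eq_iff_sum_smul_moebius_eq
    (f := fun m => ∑ t ∈ Icc 1 m with t.Coprime m, omegaN m ^ (k * t))
    (g := fun m => (dvdId k m : ℂ))).mp (fun n hn => sum_divisors_sum_coprime_omegaN_pow hn k) m hm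
  rw [← hinv, ramanujanSum, mul_apply]
  simp [zsmul_eq_mul]

def icgEigenvalue (n : ℕ) (D : Finset ℕ) (k : ℕ) : ℤ := ∑ d ∈ D, ramanujanSum (n / d) k

lemma lam_connSet {n : ℕ} (hn : n ≠ 0) {D : Finset ℕ} (hD : D ⊆ n.divisors) (k : ℕ) :
    lam n (connSet n D) k = icgEigenvalue n D k := by
  rw [lam, connSet, ← sum_fiberwise_eq_sum_filter, icgEigenvalue, Int.cast_sum]
  refine sum_congr rfl fun d hd => ?_
  have hdn : d ∣ n := Nat.dvd_of_mem_divisors (hD hd)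
  have hd0 : 0 < d := Nat.pos_of_dvd_of_pos hdn (Nat.pos_of_ne_zero hn)
  obtain ⟨m, rfl⟩ := hdn
  rw [sum_gcd_eq_omegaN_pow hd0, sum_coprime_omegaN_pow, Nat.mul_div_cancel_left _ hd0]

lemma spec_connSet {n : ℕ} (hn : n ≠ 0) {D : Finset ℕ} (hD : D ⊆ n.divisors) :
    spec n (connSet n D) = ((Icc 1 n).val.map (icgEigenvalue n D)).map (Int.cast) := by
  rw [spec, Multiset.map_map]
  exact Multiset.map_congr rfl fun k _ => lam_connSet hn hD k

lemma dvd_pow_mul_of_not_pow_succ_dvd {r a e M w : ℕ} (hr : r.Prime) (hw : w ∣ r ^ a * M)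
    (hne : ¬ r ^ (e + 1) ∣ w) : w ∣ r ^ e * M := by
  have hw0 : w ≠ 0 := by rintro rfl; exact hne (dvd_zero _)
  obtain ⟨i, w', hw', rfl⟩ := Nat.exists_eq_pow_mul_and_not_dvd hw0 r hr.ne_one
  have hi : i ≤ e := by
    by_contra hie
    exact hne (Dvd.dvd.mul_right (pow_dvd_pow r (by omega)) w')
  have hcop : w'.Coprime (r ^ a) :=
    Nat.Coprime.pow_right a (Nat.coprime_comm.mp ((hr.coprime_iff_not_dvd).mpr hw'))
  exact mul_dvd_mul (pow_dvd_pow r hi) (hcop.dvd_of_dvd_mul_left ((dvd_mul_left w' _).trans hw))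

lemma intCast_icgEigenvalue_eq_gcd {r a M : ℕ} (hr : r.Prime) {D : Finset ℕ}
    (hD : D ⊆ (r ^ a * M).divisors) (e k : ℕ) :
    (icgEigenvalue (r ^ a * M) D k : ZMod (r ^ (e + 1))) =
      icgEigenvalue (r ^ a * M) D (k.gcd (r ^ e * M)) := by
  simp only [icgEigenvalue, Int.cast_sum]
  refine sum_congr rfl fun d hd => intCast_ramanujanSum_eq_gcd (fun w hw hne => ?_) k
  exact dvd_pow_mul_of_not_pow_succ_dvd hr
    (hw.trans (Nat.div_dvd_of_dvd (Nat.dvd_of_mem_divisors (hD hd)))) hne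

def indicatorDiff (D₁ D₂ : Finset ℕ) (d : ℕ) : ℤ :=
  (if d ∈ D₁ then 1 else 0) - (if d ∈ D₂ then 1 else 0)

lemma icgEigenvalue_sub_eq_sum {n : ℕ} {D₁ D₂ : Finset ℕ} (hD₁ : D₁ ⊆ n.divisors)
    (hD₂ : D₂ ⊆ n.divisors) (k : ℕ) :
    icgEigenvalue n D₁ k - icgEigenvalue n D₂ k =
      ∑ d ∈ n.divisors, indicatorDiff D₁ D₂ d * ramanujanSum (n / d) k := by
  simp only [indicatorDiff, sub_mul, ite_mul, one_mul, zero_mul, sum_sub_distrib, sum_ite_mem,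
    inter_eq_right.mpr hD₁, inter_eq_right.mpr hD₂, icgEigenvalue]

lemma indicatorDiff_eq_zero_iff {D₁ D₂ : Finset ℕ} {v : ℕ} :
    indicatorDiff D₁ D₂ v = 0 ↔ (v ∈ D₁ ↔ v ∈ D₂) := by
  unfold indicatorDiff
  split_ifs <;> simp_all

lemma abs_indicatorDiff_sub_lt {r : ℕ} (hr3 : 3 ≤ r) (D₁ D₂ : Finset ℕ) (v w : ℕ) :
    |indicatorDiff D₁ D₂ v - indicatorDiff D₁ D₂ w| < r := by
  have hr3' : (3 : ℤ) ≤ r := by exact_mod_cast hr3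
  have h2 : |indicatorDiff D₁ D₂ v - indicatorDiff D₁ D₂ w| ≤ 2 := by
    unfold indicatorDiff
    split_ifs <;> norm_num
  linarith

lemma eq_and_eq_of_add_replicate_eq {α : Type*} {c : ℕ} {x y : α} {s t : Multiset α}
    (h : s + Multiset.replicate c x = t + Multiset.replicate c y) (ht : Multiset.card t < c) :
    s = t ∧ x = y := by
  classical
  have hxy : x = y := by
    by_contra hne
    have hcount := congrArg (Multiset.count x) h
    simp only [Multiset.count_add, Multiset.count_replicate_self, Multiset.count_replicate,
      if_neg (Ne.symm hne), add_zero] at hcount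
    have := Multiset.count_le_card x t
    omega
  subst hxy
  exact ⟨add_right_cancel h, rfl⟩

lemma eq_of_replicate_add_replicate_add_replicate_eq {α : Type*} {c₀ c₁ c₂ : ℕ}
    (h₂ : 0 < c₂) (h₁ : c₂ < c₁) (h₀ : c₂ + c₁ < c₀) {x₀ x₁ x₂ y₀ y₁ y₂ : α}
    (h : Multiset.replicate c₂ x₂ + Multiset.replicate c₁ x₁ + Multiset.replicate c₀ x₀ =
      Multiset.replicate c₂ y₂ + Multiset.replicate c₁ y₁ + Multiset.replicate c₀ y₀) :
    x₀ = y₀ ∧ x₁ = y₁ ∧ x₂ = y₂ := by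
  obtain ⟨h', hx₀⟩ := eq_and_eq_of_add_replicate_eq h (by simpa using h₀)
  obtain ⟨h'', hx₁⟩ := eq_and_eq_of_add_replicate_eq h' (by simpa using h₁)
  exact ⟨hx₀, hx₁, Multiset.replicate_right_injective h₂.ne' h''⟩

lemma map_gcd_prime_sq {β : Type*} {s : ℕ} (hs : s.Prime) (K : Finset ℕ) (f : ℕ → β) :
    K.val.map (fun k => f (k.gcd (s ^ 2))) =
      Multiset.replicate #{k ∈ K | s ^ 2 ∣ k} (f (s ^ 2)) +
      Multiset.replicate (#{k ∈ K | s ∣ k} - #{k ∈ K | s ^ 2 ∣ k}) (f s) +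
      Multiset.replicate (#K - #{k ∈ K | s ∣ k}) (f 1) := by
  set g := fun k : ℕ => f (k.gcd (s ^ 2))
  have hsplit : ∀ (A : Finset ℕ) (p : ℕ → Prop) [DecidablePred p],
      A.val.map g = (A.filter p).val.map g + (A.filter (fun k => ¬ p k)).val.map g := by
    intro A p _
    rw [filter_val, filter_val, ← Multiset.map_add, Multiset.filter_add_not]
  have hconst : ∀ (A : Finset ℕ) (b : β), (∀ k ∈ A, g k = b) →
      A.val.map g = Multiset.replicate #A b := fun A b hA =>
    Multiset.eq_replicate.mpr ⟨Multiset.card_map _ _, by simpa using hA⟩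
  have hss : {k ∈ K | s ∣ k ∧ s ^ 2 ∣ k} = {k ∈ K | s ^ 2 ∣ k} :=
    filter_congr fun k _ => and_iff_right_of_imp (dvd_trans (dvd_pow_self s two_ne_zero))
  have hcard₁ := card_filter_add_card_filter_not (s := {k ∈ K | s ∣ k}) (fun k => s ^ 2 ∣ k)
  have hcard₀ := card_filter_add_card_filter_not (s := K) (fun k => s ∣ k)
  rw [filter_filter, hss] at hcard₁
  rw [hsplit K (s ∣ ·), hsplit {k ∈ K | s ∣ k} (s ^ 2 ∣ ·), filter_filter, hss,
    hconst _ (f (s ^ 2)) fun k hk => by simp [g, Nat.gcd_eq_right (mem_filter.mp hk).2],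
    hconst {k ∈ {k ∈ K | s ∣ k} | ¬ s ^ 2 ∣ k} (f s) fun k hk => ?_,
    hconst {k ∈ K | ¬ s ∣ k} (f 1) fun k hk => ?_]
  · congr 3 <;> omega
  · have hk' : ¬ s ∣ k := (mem_filter.mp hk).2
    simp only [g, Nat.Coprime.gcd_eq_one
      (Nat.Coprime.pow_right 2 (Nat.coprime_comm.mp ((hs.coprime_iff_not_dvd).mpr hk')))]
  · obtain ⟨hk₁, hk₂⟩ := mem_filter.mp hk
    obtain ⟨k', rfl⟩ := (mem_filter.mp hk₁).2
    have hk' : ¬ s ∣ k' := fun h => hk₂ (pow_two s ▸ mul_dvd_mul_left s h)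
    simp only [g, pow_two, Nat.gcd_mul_left,
      Nat.Coprime.gcd_eq_one (Nat.coprime_comm.mp ((hs.coprime_iff_not_dvd).mpr hk')), mul_one]

lemma card_filter_dvd_Icc (n d : ℕ) : #{k ∈ Icc 1 n | d ∣ k} = n / d :=
  Nat.Ioc_filter_dvd_card_eq_div n d

lemma card_filter_dvd_filter_dvd_Icc {a b : ℕ} (hab : a.Coprime b) (n : ℕ) :
    #{k ∈ {k ∈ Icc 1 n | a ∣ k} | b ∣ k} = n / (a * b) := by
  rw [filter_filter]
  simp_rw [← mul_dvd_iff_of_coprime hab]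
  exact card_filter_dvd_Icc n (a * b)

lemma exists_eq_pow_mul_pow_of_dvd {p q a b v : ℕ} (hp : p.Prime) (hq : q.Prime)
    (h : v ∣ p ^ a * q ^ b) : ∃ i ≤ a, ∃ j ≤ b, v = p ^ i * q ^ j := by
  obtain ⟨x, y, hx, hy, rfl⟩ := Nat.dvd_mul.mp h
  obtain ⟨i, hi, rfl⟩ := (Nat.dvd_prime_pow hp).mp hx
  obtain ⟨j, hj, rfl⟩ := (Nat.dvd_prime_pow hq).mp hy
  exact ⟨i, hi, j, hj, rfl⟩

lemma sum_divisors_mul_of_coprime {M : Type*} [AddCommMonoid M] {m n : ℕ} (h : m.Coprime n)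
    (f : ℕ → M) : ∑ d ∈ (m * n).divisors, f d = ∑ x ∈ m.divisors, ∑ y ∈ n.divisors, f (x * y) := by
  rw [h.divisors_mul, sum_map, ← sum_product' (f := fun x y => f (x * y))]
  exact sum_attach _ (fun p : ℕ × ℕ => f (p.1 * p.2))

section TwoPrimes

variable {r s : ℕ} {D₁ D₂ : Finset ℕ}

lemma coprime_pow_pow (hr : r.Prime) (hs : s.Prime) (hrs : r ≠ s) (i j : ℕ) :
    (r ^ i).Coprime (s ^ j) :=
  Nat.Coprime.pow i j ((Nat.coprime_primes hr hs).mpr hrs)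

lemma sq_mul_sq_div_pow_mul_pow (hr : r.Prime) (hs : s.Prime) {i j : ℕ} (hi : i ≤ 2) (hj : j ≤ 2) :
    r ^ 2 * s ^ 2 / (r ^ i * s ^ j) = r ^ (2 - i) * s ^ (2 - j) := by
  refine Nat.div_eq_of_eq_mul_left (by positivity [hr.pos, hs.pos]) ?_
  calc r ^ 2 * s ^ 2 = (r ^ (2 - i) * r ^ i) * (s ^ (2 - j) * s ^ j) := by
        rw [pow_sub_mul_pow r hi, pow_sub_mul_pow s hj]
    _ = r ^ (2 - i) * s ^ (2 - j) * (r ^ i * s ^ j) := by ring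

lemma icgEigenvalue_sub_pow_mul_pow (hr : r.Prime) (hs : s.Prime) (hrs : r ≠ s)
    (hD₁ : D₁ ⊆ (r ^ 2 * s ^ 2).divisors) (hD₂ : D₂ ⊆ (r ^ 2 * s ^ 2).divisors) (e b : ℕ) :
    icgEigenvalue (r ^ 2 * s ^ 2) D₁ (r ^ e * s ^ b) -
        icgEigenvalue (r ^ 2 * s ^ 2) D₂ (r ^ e * s ^ b) =
      ∑ j ∈ range 3, (∑ i ∈ range 3, indicatorDiff D₁ D₂ (r ^ i * s ^ j) *
        ramanujanSum (r ^ (2 - i)) (r ^ e)) * ramanujanSum (s ^ (2 - j)) (s ^ b) := by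
  have hcop := coprime_pow_pow hr hs hrs
  rw [icgEigenvalue_sub_eq_sum hD₁ hD₂, sum_divisors_mul_of_coprime (hcop 2 2),
    Nat.sum_divisors_prime_pow hr, sum_comm]
  simp_rw [Nat.sum_divisors_prime_pow hs, sum_mul]
  refine sum_congr rfl fun j hj => sum_congr rfl fun i hi => ?_
  rw [mem_range] at hi hj
  rw [sq_mul_sq_div_pow_mul_pow hr hs (by omega) (by omega), ramanujanSum_mul (hcop _ _),
    ramanujanSum_mul_right_of_coprime (hcop _ _), mul_comm (r ^ e),
    ramanujanSum_mul_right_of_coprime (hcop _ _).symm]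
  ring

lemma card_filter_pow_dvd_filter_pow_dvd (hr : r.Prime) (hs : s.Prime) (hrs : r ≠ s) {e j : ℕ}
    (he : e ≤ 2) (hj : j ≤ 2) :
    #{k ∈ {k ∈ Icc 1 (r ^ 2 * s ^ 2) | r ^ e ∣ k} | s ^ j ∣ k} = r ^ (2 - e) * s ^ (2 - j) :=
  (card_filter_dvd_filter_dvd_Icc (coprime_pow_pow hr hs hrs e j) _).trans
    (sq_mul_sq_div_pow_mul_pow hr hs he hj)

lemma dvd_icgEigenvalue_sub_of_map_eq (hr : r.Prime) (hs : s.Prime) (hrs : r ≠ s) (hs3 : 3 ≤ s)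
    {e : ℕ} (he : e ≤ 2) (hD₁ : D₁ ⊆ (r ^ 2 * s ^ 2).divisors)
    (hD₂ : D₂ ⊆ (r ^ 2 * s ^ 2).divisors)
    (h : {k ∈ Icc 1 (r ^ 2 * s ^ 2) | r ^ e ∣ k}.val.map
        (fun k => (icgEigenvalue (r ^ 2 * s ^ 2) D₁ k : ZMod (r ^ (e + 1)))) =
      {k ∈ Icc 1 (r ^ 2 * s ^ 2) | r ^ e ∣ k}.val.map
        (fun k => (icgEigenvalue (r ^ 2 * s ^ 2) D₂ k : ZMod (r ^ (e + 1)))))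
    {b : ℕ} (hb : b ≤ 2) :
    (r : ℤ) ^ (e + 1) ∣
      icgEigenvalue (r ^ 2 * s ^ 2) D₁ (r ^ e * s ^ b) -
        icgEigenvalue (r ^ 2 * s ^ 2) D₂ (r ^ e * s ^ b) := by
  have hcop := coprime_pow_pow hr hs hrs
  have hK : ∀ D ⊆ (r ^ 2 * s ^ 2).divisors,
      {k ∈ Icc 1 (r ^ 2 * s ^ 2) | r ^ e ∣ k}.val.map
        (fun k => (icgEigenvalue (r ^ 2 * s ^ 2) D k : ZMod (r ^ (e + 1)))) =
      {k ∈ Icc 1 (r ^ 2 * s ^ 2) | r ^ e ∣ k}.val.map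
        (fun k =>
          (icgEigenvalue (r ^ 2 * s ^ 2) D (r ^ e * k.gcd (s ^ 2)) : ZMod (r ^ (e + 1)))) := by
    intro D hD
    refine Multiset.map_congr rfl fun k hk => ?_
    rw [intCast_icgEigenvalue_eq_gcd hr hD, Nat.Coprime.gcd_mul k (hcop e 2),
      Nat.gcd_eq_right (mem_filter.mp (mem_val.mp hk)).2]
  have hcard₀ := card_filter_pow_dvd_filter_pow_dvd hr hs hrs he (j := 0) (by norm_num)
  have hcard₁ := card_filter_pow_dvd_filter_pow_dvd hr hs hrs he (j := 1) (by norm_num)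
  have hcard₂ := card_filter_pow_dvd_filter_pow_dvd hr hs hrs he (j := 2) le_rfl
  simp only [pow_zero, one_dvd, filter_true, pow_one, Nat.reduceSub, mul_one]
    at hcard₀ hcard₁ hcard₂
  rw [hK D₁ hD₁, hK D₂ hD₂,
    map_gcd_prime_sq hs _ fun g => (icgEigenvalue _ D₁ (r ^ e * g) : ZMod (r ^ (e + 1))),
    map_gcd_prime_sq hs _ fun g => (icgEigenvalue _ D₂ (r ^ e * g) : ZMod (r ^ (e + 1))),
    hcard₀, hcard₁, hcard₂] at h
  set M := r ^ (2 - e)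
  have hM : 0 < M := pow_pos hr.pos _
  have hMs : M * 3 ≤ M * s := Nat.mul_le_mul_left M hs3
  have hMss : M * s * 3 ≤ M * s * s := Nat.mul_le_mul_left (M * s) hs3
  have hsq : M * s ^ 2 = M * s * s := by ring
  obtain ⟨h₀, h₁, h₂⟩ := eq_of_replicate_add_replicate_add_replicate_eq hM (by omega) (by omega) h
  have hdvd : ∀ x y : ℤ, (x : ZMod (r ^ (e + 1))) = y → (r : ℤ) ^ (e + 1) ∣ x - y :=
    fun x y hxy => by exact_mod_cast (ZMod.intCast_eq_intCast_iff_dvd_sub _ _ _).mp hxy.symm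
  interval_cases b
  · simpa using hdvd _ _ h₀
  · simpa using hdvd _ _ h₁
  · exact hdvd _ _ h₂

lemma indicatorDiff_sq_mul_eq (hr : r.Prime) (hs : s.Prime) (hrs : r ≠ s) (hr3 : 3 ≤ r)
    (hs3 : 3 ≤ s) (hD₁ : D₁ ⊆ (r ^ 2 * s ^ 2).divisors) (hD₂ : D₂ ⊆ (r ^ 2 * s ^ 2).divisors)
    (h : (Icc 1 (r ^ 2 * s ^ 2)).val.map (icgEigenvalue (r ^ 2 * s ^ 2) D₁) =
      (Icc 1 (r ^ 2 * s ^ 2)).val.map (icgEigenvalue (r ^ 2 * s ^ 2) D₂))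
    {j : ℕ} (hj : j ≤ 2) :
    indicatorDiff D₁ D₂ (r ^ 2 * s ^ j) = indicatorDiff D₁ D₂ (r * s ^ j) := by
  have hmod : {k ∈ Icc 1 (r ^ 2 * s ^ 2) | r ^ 0 ∣ k}.val.map
        (fun k => (icgEigenvalue (r ^ 2 * s ^ 2) D₁ k : ZMod (r ^ (0 + 1)))) =
      {k ∈ Icc 1 (r ^ 2 * s ^ 2) | r ^ 0 ∣ k}.val.map
        (fun k => (icgEigenvalue (r ^ 2 * s ^ 2) D₂ k : ZMod (r ^ (0 + 1)))) := by
    rw [filter_true_of_mem fun k _ => by simp]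
    simpa only [Multiset.map_map, Function.comp_def] using
      congrArg (Multiset.map ((↑) : ℤ → ZMod (r ^ (0 + 1)))) h
  have hdvd : ∀ b ≤ 2, (r : ℤ) ∣ ∑ j ∈ range 3,
      (indicatorDiff D₁ D₂ (r ^ 2 * s ^ j) - indicatorDiff D₁ D₂ (r * s ^ j)) *
        ramanujanSum (s ^ (2 - j)) (s ^ b) := by
    intro b hb
    have hb' := dvd_icgEigenvalue_sub_of_map_eq hr hs hrs hs3 (by norm_num) hD₁ hD₂ hmod hb
    rw [icgEigenvalue_sub_pow_mul_pow hr hs hrs hD₁ hD₂] at hb'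
    simpa only [zero_add, pow_zero, pow_one, sum_mul_ramanujanSum_prime_pow_apply_one hr] using hb'
  have hrs' : IsCoprime (r : ℤ) s :=
    Nat.isCoprime_iff_coprime.mpr ((Nat.coprime_primes hr hs).mpr hrs)
  have hj' := dvd_of_forall_dvd_sum_ramanujanSum hs hrs' _ hdvd hj
  exact sub_eq_zero.mp (Int.eq_zero_of_abs_lt_dvd hj' (abs_indicatorDiff_sub_lt hr3 _ _ _ _))

lemma icgEigenvalue_prime_pow_eq (hr : r.Prime) (hs : s.Prime) (hrs : r ≠ s) (hr3 : 3 ≤ r)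
    (hs3 : 3 ≤ s) (hD₁ : D₁ ⊆ (r ^ 2 * s ^ 2).divisors) (hD₂ : D₂ ⊆ (r ^ 2 * s ^ 2).divisors)
    (h : (Icc 1 (r ^ 2 * s ^ 2)).val.map (icgEigenvalue (r ^ 2 * s ^ 2) D₁) =
      (Icc 1 (r ^ 2 * s ^ 2)).val.map (icgEigenvalue (r ^ 2 * s ^ 2) D₂))
    (b : ℕ) :
    icgEigenvalue (r ^ 2 * s ^ 2) D₁ (s ^ b) = icgEigenvalue (r ^ 2 * s ^ 2) D₂ (s ^ b) := by
  have hdiff := icgEigenvalue_sub_pow_mul_pow hr hs hrs hD₁ hD₂ 0 b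
  simp only [pow_zero, one_mul, sum_mul_ramanujanSum_prime_pow_apply_one hr, pow_one] at hdiff
  refine sub_eq_zero.mp (hdiff.trans (sum_eq_zero fun j hj => ?_))
  rw [indicatorDiff_sq_mul_eq hr hs hrs hr3 hs3 hD₁ hD₂ h (by simp at hj; omega), sub_self,
    zero_mul]

lemma map_filter_dvd_intCast_eq (hr : r.Prime) (hs : s.Prime) (hrs : r ≠ s) (hr3 : 3 ≤ r)
    (hs3 : 3 ≤ s) (hD₁ : D₁ ⊆ (r ^ 2 * s ^ 2).divisors) (hD₂ : D₂ ⊆ (r ^ 2 * s ^ 2).divisors)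
    (h : (Icc 1 (r ^ 2 * s ^ 2)).val.map (icgEigenvalue (r ^ 2 * s ^ 2) D₁) =
      (Icc 1 (r ^ 2 * s ^ 2)).val.map (icgEigenvalue (r ^ 2 * s ^ 2) D₂)) :
    {k ∈ Icc 1 (r ^ 2 * s ^ 2) | r ^ 1 ∣ k}.val.map
        (fun k => (icgEigenvalue (r ^ 2 * s ^ 2) D₁ k : ZMod (r ^ (1 + 1)))) =
      {k ∈ Icc 1 (r ^ 2 * s ^ 2) | r ^ 1 ∣ k}.val.map
        (fun k => (icgEigenvalue (r ^ 2 * s ^ 2) D₂ k : ZMod (r ^ (1 + 1)))) := by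
  -- Away from multiples of `r`, the eigenvalue modulo `r²` is one of those at `1, s, s²`, where
  -- the two spectra agree exactly.
  have hcoprime : {k ∈ Icc 1 (r ^ 2 * s ^ 2) | ¬ r ∣ k}.val.map
        (fun k => (icgEigenvalue (r ^ 2 * s ^ 2) D₁ k : ZMod (r ^ (1 + 1)))) =
      {k ∈ Icc 1 (r ^ 2 * s ^ 2) | ¬ r ∣ k}.val.map
        (fun k => (icgEigenvalue (r ^ 2 * s ^ 2) D₂ k : ZMod (r ^ (1 + 1)))) := by
    refine Multiset.map_congr rfl fun k hk => ?_
    have hrk : k.gcd r = 1 :=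
      Nat.Coprime.gcd_eq_one (Nat.coprime_comm.mp ((hr.coprime_iff_not_dvd).mpr
        (mem_filter.mp (mem_val.mp hk)).2))
    obtain ⟨b, -, hgcd⟩ := (Nat.dvd_prime_pow hs).mp (Nat.gcd_dvd_right k (s ^ 2))
    rw [intCast_icgEigenvalue_eq_gcd hr hD₁ 1, intCast_icgEigenvalue_eq_gcd hr hD₂ 1,
      Nat.Coprime.gcd_mul k (coprime_pow_pow hr hs hrs 1 2), pow_one, hrk, one_mul, hgcd,
      icgEigenvalue_prime_pow_eq hr hs hrs hr3 hs3 hD₁ hD₂ h b]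
  have hall := congrArg (Multiset.map ((↑) : ℤ → ZMod (r ^ (1 + 1)))) h
  rw [Multiset.map_map, Multiset.map_map, ← Multiset.filter_add_not (r ∣ ·) (Icc 1 _).val,
    Multiset.map_add, Multiset.map_add] at hall
  rw [pow_one]
  exact add_right_cancel (hall.trans (congrArg (_ + ·) hcoprime.symm))

lemma indicatorDiff_mul_eq (hr : r.Prime) (hs : s.Prime) (hrs : r ≠ s) (hr3 : 3 ≤ r)
    (hs3 : 3 ≤ s) (hD₁ : D₁ ⊆ (r ^ 2 * s ^ 2).divisors) (hD₂ : D₂ ⊆ (r ^ 2 * s ^ 2).divisors)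
    (h : (Icc 1 (r ^ 2 * s ^ 2)).val.map (icgEigenvalue (r ^ 2 * s ^ 2) D₁) =
      (Icc 1 (r ^ 2 * s ^ 2)).val.map (icgEigenvalue (r ^ 2 * s ^ 2) D₂))
    {j : ℕ} (hj : j ≤ 2) :
    indicatorDiff D₁ D₂ (r * s ^ j) = indicatorDiff D₁ D₂ (s ^ j) := by
  have hmod := map_filter_dvd_intCast_eq hr hs hrs hr3 hs3 hD₁ hD₂ h
  have hdvd : ∀ b ≤ 2, (r : ℤ) ^ 2 ∣ ∑ j ∈ range 3,
      (indicatorDiff D₁ D₂ (r ^ 2 * s ^ j) + (r - 1) * indicatorDiff D₁ D₂ (r * s ^ j) -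
        r * indicatorDiff D₁ D₂ (s ^ j)) * ramanujanSum (s ^ (2 - j)) (s ^ b) := by
    intro b hb
    have hb' := dvd_icgEigenvalue_sub_of_map_eq hr hs hrs hs3 (by norm_num) hD₁ hD₂ hmod hb
    rw [icgEigenvalue_sub_pow_mul_pow hr hs hrs hD₁ hD₂] at hb'
    simpa only [sum_mul_ramanujanSum_prime_pow_apply_self hr, Nat.reduceAdd, pow_one, pow_zero,
      one_mul] using hb'
  have hrs' : IsCoprime ((r : ℤ) ^ 2) s :=
    (Nat.isCoprime_iff_coprime.mpr ((Nat.coprime_primes hr hs).mpr hrs)).pow_left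
  have hj' := dvd_of_forall_dvd_sum_ramanujanSum hs hrs' _ hdvd hj
  rw [indicatorDiff_sq_mul_eq hr hs hrs hr3 hs3 hD₁ hD₂ h hj,
    show ∀ x y : ℤ, x + (r - 1) * x - r * y = r * (x - y) by intros; ring, pow_two] at hj'
  exact sub_eq_zero.mp (Int.eq_zero_of_abs_lt_dvd
    ((mul_dvd_mul_iff_left (by exact_mod_cast hr.ne_zero)).mp hj')
    (abs_indicatorDiff_sub_lt hr3 _ _ _ _))

lemma indicatorDiff_pow_mul_eq (hr : r.Prime) (hs : s.Prime) (hrs : r ≠ s) (hr3 : 3 ≤ r)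
    (hs3 : 3 ≤ s) {n : ℕ} (hn : n = r ^ 2 * s ^ 2) (hD₁ : D₁ ⊆ n.divisors) (hD₂ : D₂ ⊆ n.divisors)
    (h : (Icc 1 n).val.map (icgEigenvalue n D₁) = (Icc 1 n).val.map (icgEigenvalue n D₂))
    {i j : ℕ} (hi : i ≤ 2) (hj : j ≤ 2) :
    indicatorDiff D₁ D₂ (r ^ i * s ^ j) = indicatorDiff D₁ D₂ (r ^ 2 * s ^ j) := by
  subst hn
  have hsq := indicatorDiff_sq_mul_eq hr hs hrs hr3 hs3 hD₁ hD₂ h hj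
  interval_cases i
  · rw [pow_zero, one_mul, hsq, indicatorDiff_mul_eq hr hs hrs hr3 hs3 hD₁ hD₂ h hj]
  · rw [pow_one, hsq]
  · rfl

end TwoPrimes

/-- So's conjecture for `n = p² q²` with primes `3 ≤ p < q`. -/
theorem so_p2q2
    (p q n : ℕ) (hp : p.Prime) (hq : q.Prime) (hp3 : 3 ≤ p) (hpq : p < q)
    (hn : n = p ^ 2 * q ^ 2)
    (D₁ D₂ : Finset ℕ)
    (hD₁ : D₁ ⊆ n.divisors) (hD₂ : D₂ ⊆ n.divisors)
    (hn₁ : n ∉ D₁) (hn₂ : n ∉ D₂)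
    (hspec : spec n (connSet n D₁) = spec n (connSet n D₂)) :
    D₁ = D₂ := by
  have hn0 : n ≠ 0 := hn ▸ mul_ne_zero (pow_ne_zero 2 hp.ne_zero) (pow_ne_zero 2 hq.ne_zero)
  have hΛ : (Icc 1 n).val.map (icgEigenvalue n D₁) = (Icc 1 n).val.map (icgEigenvalue n D₂) :=
    Multiset.map_injective Int.cast_injective
      (by rw [← spec_connSet hn0 hD₁, ← spec_connSet hn0 hD₂, hspec])
  have hzero : ∀ i ≤ 2, ∀ j ≤ 2, indicatorDiff D₁ D₂ (p ^ i * q ^ j) = 0 := by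
    intro i hi j hj
    rw [indicatorDiff_pow_mul_eq hp hq hpq.ne hp3 (by omega) hn hD₁ hD₂ hΛ hi hj, mul_comm,
      indicatorDiff_pow_mul_eq hq hp hpq.ne' (by omega) hp3 (hn.trans (mul_comm _ _)) hD₁ hD₂ hΛ
        hj le_rfl, mul_comm, ← hn]
    simp [indicatorDiff, hn₁, hn₂]
  ext v
  by_cases hv : v ∈ n.divisors
  · obtain ⟨i, hi, j, hj, rfl⟩ :=
      exists_eq_pow_mul_pow_of_dvd hp hq (hn ▸ Nat.dvd_of_mem_divisors hv)
    exact indicatorDiff_eq_zero_iff.mp (hzero i hi j hj)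
  · exact iff_of_false (fun h => hv (hD₁ h)) (fun h => hv (hD₂ h))
end

section
/- Let n be an odd positive integer with prime factorization n = p_1^{J_1} p_2^{J_2} ··· p_s^{J_s}, where s ≥ 2, p_1 < ··· < p_s are odd primes, each J_i ≥ 1, and for every r ∈ {1,...,s-1} one has ∏_{i=1}^{r} p_i^{J_i} < p_{r+1}. Let D_1 and D_2 be sets of divisors of n such that ∑_{d∈D_1} φ(n/d) = ∑_{d∈D_2} φ(n/d). Then D_1 = D_2. -/
open Finset

/-- Superincreasing families have injective subset sums. -/
lemma aux_subset_sum_inj (S : Finset ℕ) (f : ℕ → ℕ)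
    (hS : ∀ m ∈ S, ∑ d ∈ S.filter (fun d => d < m), f d < f m)
    {A B : Finset ℕ} (hA : A ⊆ S) (hB : B ⊆ S)
    (hsum : ∑ d ∈ A, f d = ∑ d ∈ B, f d) : A = B := by
  have hdiffsum : ∑ d ∈ A \ B, f d = ∑ d ∈ B \ A, f d := by
    have h1 := Finset.sum_inter_add_sum_sdiff A B f
    have h2 := Finset.sum_inter_add_sum_sdiff B A f
    rw [Finset.inter_comm] at h2
    omega
  by_contra hne
  have hne' : ((A \ B) ∪ (B \ A)).Nonempty := by
    rw [Finset.nonempty_iff_ne_empty]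
    intro h
    obtain ⟨h1, h2⟩ := Finset.union_eq_empty.1 h
    exact hne (Finset.Subset.antisymm (Finset.sdiff_eq_empty_iff_subset.1 h1)
      (Finset.sdiff_eq_empty_iff_subset.1 h2))
  set m := ((A \ B) ∪ (B \ A)).max' hne' with hm
  have hmmem := Finset.max'_mem _ hne'
  have hle : ∀ x ∈ (A \ B) ∪ (B \ A), x ≤ m := fun x hx => Finset.le_max' _ x hx
  rcases Finset.mem_union.1 hmmem with hmA | hmB
  · have h1 : f m ≤ ∑ d ∈ A \ B, f d :=
      Finset.single_le_sum (fun _ _ => Nat.zero_le _) hmA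
    have h2 : (B \ A) ⊆ S.filter (fun d => d < m) := by
      intro x hx
      rw [Finset.mem_filter]
      refine ⟨hB (Finset.mem_sdiff.1 hx).1, ?_⟩
      have hxle := hle x (Finset.mem_union_right _ hx)
      rcases eq_or_lt_of_le hxle with rfl | h
      · exact absurd (Finset.mem_sdiff.1 hmA).1 (Finset.mem_sdiff.1 hx).2
      · exact h
    have h3 := Finset.sum_le_sum_of_subset (f := f) h2
    have h4 := hS m (hA (Finset.mem_sdiff.1 hmA).1)
    omega
  · have h1 : f m ≤ ∑ d ∈ B \ A, f d :=
      Finset.single_le_sum (fun _ _ => Nat.zero_le _) hmB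
    have h2 : (A \ B) ⊆ S.filter (fun d => d < m) := by
      intro x hx
      rw [Finset.mem_filter]
      refine ⟨hA (Finset.mem_sdiff.1 hx).1, ?_⟩
      have hxle := hle x (Finset.mem_union_left _ hx)
      rcases eq_or_lt_of_le hxle with rfl | h
      · exact absurd (Finset.mem_sdiff.1 hmB).1 (Finset.mem_sdiff.1 hx).2
      · exact h
    have h3 := Finset.sum_le_sum_of_subset (f := f) h2
    have h4 := hS m (hB (Finset.mem_sdiff.1 hmB).1)
    omega

/-- The key inductive step: appending a large prime power preserves the
superincreasing property of totients of divisors. -/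
lemma aux_good_step (n' pp Jp : ℕ) (hn' : 0 < n') (hp : pp.Prime)
    (h2 : n' + 1 < pp) (hJ : 1 ≤ Jp)
    (IH : ∀ m ∈ n'.divisors,
      ∑ d ∈ n'.divisors.filter (fun d => d < m), Nat.totient d < Nat.totient m) :
    ∀ m ∈ (n' * pp ^ Jp).divisors,
      ∑ d ∈ (n' * pp ^ Jp).divisors.filter (fun d => d < m), Nat.totient d
        < Nat.totient m := by
  have hpp0 : 0 < pp := hp.pos
  have hpn : ¬ pp ∣ n' := fun h => absurd (Nat.le_of_dvd hn' h) (by omega)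
  have hN0 : n' * pp ^ Jp ≠ 0 := by positivity
  have hcop : ∀ d', d' ∣ n' → ∀ b : ℕ, Nat.Coprime d' (pp ^ b) := by
    intro d' hd' b
    exact Nat.Coprime.pow_right b
      ((hp.coprime_iff_not_dvd.2 (fun h => hpn (h.trans hd'))).symm)
  have hmem : ∀ d, d ∈ (n' * pp ^ Jp).divisors ↔
      ∃ d' ∈ n'.divisors, ∃ b ∈ Finset.range (Jp + 1), d = d' * pp ^ b := by
    intro d
    rw [Nat.divisors_mul, Finset.mem_mul]
    constructor
    · rintro ⟨y, hy, z, hz, rfl⟩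
      obtain ⟨b, hb, rfl⟩ := (Nat.dvd_prime_pow hp).1 (Nat.mem_divisors.1 hz).1
      exact ⟨y, hy, b, Finset.mem_range.2 (by omega), rfl⟩
    · rintro ⟨d', hd', b, hb, rfl⟩
      refine ⟨d', hd', pp ^ b, Nat.mem_divisors.2 ⟨pow_dvd_pow pp ?_, by positivity⟩, rfl⟩
      exact Nat.lt_succ_iff.1 (Finset.mem_range.1 hb)
  -- injectivity of (d', b) ↦ d' * pp ^ b
  have hkey : ∀ d₁ d₂ b₁ b₂ : ℕ, d₁ ∣ n' → b₁ ≤ b₂ →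
      d₁ * pp ^ b₁ = d₂ * pp ^ b₂ → d₁ = d₂ ∧ b₁ = b₂ := by
    intro d₁ d₂ b₁ b₂ hd₁ hle heq
    have hpow : pp ^ b₂ = pp ^ (b₂ - b₁) * pp ^ b₁ := by
      rw [← pow_add]; congr 1; omega
    rw [hpow, ← mul_assoc] at heq
    have h1 : d₁ = d₂ * pp ^ (b₂ - b₁) :=
      Nat.eq_of_mul_eq_mul_right (pow_pos hpp0 b₁) heq
    rcases Nat.eq_or_lt_of_le hle with rfl | hlt
    · simp only [Nat.sub_self, pow_zero, mul_one] at h1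
      exact ⟨h1, rfl⟩
    · exfalso
      apply hpn
      apply dvd_trans _ hd₁
      rw [h1]
      exact Dvd.dvd.mul_left (dvd_pow_self pp (by omega)) d₂
  have hinj : ∀ x ∈ n'.divisors ×ˢ Finset.range (Jp + 1),
      ∀ y ∈ n'.divisors ×ˢ Finset.range (Jp + 1),
      x.1 * pp ^ x.2 = y.1 * pp ^ y.2 → x = y := by
    rintro ⟨d₁, b₁⟩ hx ⟨d₂, b₂⟩ hy heq
    have hd₁ : d₁ ∣ n' := (Nat.mem_divisors.1 (Finset.mem_product.1 hx).1).1
    have hd₂ : d₂ ∣ n' := (Nat.mem_divisors.1 (Finset.mem_product.1 hy).1).1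
    rcases le_total b₁ b₂ with h | h
    · obtain ⟨h1, h2⟩ := hkey d₁ d₂ b₁ b₂ hd₁ h heq
      simp [h1, h2]
    · obtain ⟨h1, h2⟩ := hkey d₂ d₁ b₂ b₁ hd₂ h heq.symm
      simp [h1, h2]
  have himage : (n' * pp ^ Jp).divisors =
      (n'.divisors ×ˢ Finset.range (Jp + 1)).image (fun x => x.1 * pp ^ x.2) := by
    ext d
    rw [hmem, Finset.mem_image]
    constructor
    · rintro ⟨d', hd', b, hb, rfl⟩
      exact ⟨(d', b), Finset.mem_product.2 ⟨hd', hb⟩, rfl⟩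
    · rintro ⟨⟨d', b⟩, hx, rfl⟩
      obtain ⟨hd', hb⟩ := Finset.mem_product.1 hx
      exact ⟨d', hd', b, hb, rfl⟩
  -- ordering of divisors is lexicographic
  have hord : ∀ d', d' ∣ n' → ∀ m', m' ∣ n' → 0 < m' → ∀ b a : ℕ,
      (d' * pp ^ b < m' * pp ^ a ↔ b < a ∨ (b = a ∧ d' < m')) := by
    intro d' hd' m' hm' hm'pos b a
    have hd'le : d' ≤ n' := Nat.le_of_dvd hn' hd'
    have hm'le : m' ≤ n' := Nat.le_of_dvd hn' hm'
    rcases lt_trichotomy b a with h | rfl | h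
    · refine iff_of_true ?_ (Or.inl h)
      calc d' * pp ^ b ≤ n' * pp ^ b := Nat.mul_le_mul_right _ hd'le
        _ < pp * pp ^ b := (Nat.mul_lt_mul_right (pow_pos hpp0 b)).2 (by omega)
        _ = pp ^ (b + 1) := by ring
        _ ≤ pp ^ a := Nat.pow_le_pow_right hpp0 (by omega)
        _ ≤ m' * pp ^ a := Nat.le_mul_of_pos_left _ hm'pos
    · constructor
      · intro hlt
        exact Or.inr ⟨rfl, Nat.lt_of_mul_lt_mul_right hlt⟩
      · rintro (h | ⟨-, h⟩)
        · exact absurd h (lt_irrefl _)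
        · exact (Nat.mul_lt_mul_right (pow_pos hpp0 b)).2 h
    · refine iff_of_false ?_ (by omega)
      push_neg
      refine le_of_lt ?_
      calc m' * pp ^ a ≤ n' * pp ^ a := Nat.mul_le_mul_right _ hm'le
        _ < pp * pp ^ a := (Nat.mul_lt_mul_right (pow_pos hpp0 a)).2 (by omega)
        _ = pp ^ (a + 1) := by ring
        _ ≤ pp ^ b := Nat.pow_le_pow_right hpp0 (by omega)
        _ ≤ d' * pp ^ b := Nat.le_mul_of_pos_left _
            (Nat.pos_of_ne_zero (fun h => by subst h; simp at hd'; omega))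
  -- geometric sum of totients of prime powers
  have hgeo : ∀ a : ℕ, 0 < a → ∑ b ∈ Finset.range a, Nat.totient (pp ^ b) = pp ^ (a - 1) := by
    intro a ha
    induction a with
    | zero => omega
    | succ k ih =>
      rcases Nat.eq_zero_or_pos k with rfl | hk
      · simp
      · rw [Finset.sum_range_succ, ih hk, Nat.totient_prime_pow hp hk]
        have harith : pp ^ (k - 1) + pp ^ (k - 1) * (pp - 1) = pp ^ (k - 1) * pp := by
          calc pp ^ (k - 1) + pp ^ (k - 1) * (pp - 1)
              = pp ^ (k - 1) * ((pp - 1) + 1) := by ring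
            _ = pp ^ (k - 1) * pp := by congr 1; omega
        rw [harith, ← pow_succ]
        congr 1
        omega
  intro m hm
  obtain ⟨m', hm', a, ha, rfl⟩ := (hmem m).1 hm
  have hm'dvd : m' ∣ n' := (Nat.mem_divisors.1 hm').1
  have hm'pos : 0 < m' := Nat.pos_of_mem_divisors hm'
  have haJ : a ≤ Jp := Nat.lt_succ_iff.1 (Finset.mem_range.1 ha)
  -- rewrite the filtered sum as a sum over pairs
  have e1 : ∑ d ∈ (n' * pp ^ Jp).divisors.filter (fun d => d < m' * pp ^ a), Nat.totient d
      = ∑ x ∈ (n'.divisors ×ˢ Finset.range (Jp + 1)).filter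
          (fun x => x.1 * pp ^ x.2 < m' * pp ^ a), Nat.totient (x.1 * pp ^ x.2) := by
    rw [himage, Finset.filter_image]
    exact Finset.sum_image (fun x hx y hy h =>
      hinj x (Finset.mem_filter.1 hx).1 y (Finset.mem_filter.1 hy).1 h)
  -- split the index set
  have e2 : (n'.divisors ×ˢ Finset.range (Jp + 1)).filter
        (fun x => x.1 * pp ^ x.2 < m' * pp ^ a)
      = (n'.divisors ×ˢ Finset.range a) ∪
        ((n'.divisors.filter (fun d => d < m')) ×ˢ {a}) := by
    ext ⟨d', b⟩
    simp only [Finset.mem_filter, Finset.mem_product, Finset.mem_union,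
      Finset.mem_range, Finset.mem_singleton]
    constructor
    · rintro ⟨⟨hd', hb⟩, hlt⟩
      rcases (hord d' (Nat.mem_divisors.1 hd').1 m' hm'dvd hm'pos b a).1 hlt with h | ⟨rfl, h⟩
      · exact Or.inl ⟨hd', h⟩
      · exact Or.inr ⟨⟨hd', h⟩, rfl⟩
    · rintro (⟨hd', h⟩ | ⟨⟨hd', h⟩, rfl⟩)
      · exact ⟨⟨hd', by omega⟩,
          (hord d' (Nat.mem_divisors.1 hd').1 m' hm'dvd hm'pos b a).2 (Or.inl h)⟩
      · exact ⟨⟨hd', by omega⟩,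
          (hord d' (Nat.mem_divisors.1 hd').1 m' hm'dvd hm'pos b b).2 (Or.inr ⟨rfl, h⟩)⟩
  have hdisj : Disjoint (n'.divisors ×ˢ Finset.range a)
      ((n'.divisors.filter (fun d => d < m')) ×ˢ ({a} : Finset ℕ)) := by
    rw [Finset.disjoint_left]
    rintro ⟨d', b⟩ hx hy
    have h1 : b < a := (Finset.mem_product.1 hx).2 |> Finset.mem_range.1
    have h2 : b = a := (Finset.mem_product.1 hy).2 |> Finset.mem_singleton.1
    omega
  have htot : ∀ d', d' ∣ n' → ∀ b : ℕ,
      Nat.totient (d' * pp ^ b) = Nat.totient d' * Nat.totient (pp ^ b) :=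
    fun d' hd' b => Nat.totient_mul (hcop d' hd' b)
  -- compute the two partial sums
  have e3 : ∑ x ∈ n'.divisors ×ˢ Finset.range a, Nat.totient (x.1 * pp ^ x.2)
      = (∑ d' ∈ n'.divisors, Nat.totient d') * ∑ b ∈ Finset.range a, Nat.totient (pp ^ b) := by
    rw [Finset.sum_product, Finset.sum_mul_sum]
    exact Finset.sum_congr rfl fun d' hd' =>
      Finset.sum_congr rfl fun b _ => htot d' (Nat.mem_divisors.1 hd').1 b
  have e4 : ∑ x ∈ (n'.divisors.filter (fun d => d < m')) ×ˢ ({a} : Finset ℕ),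
        Nat.totient (x.1 * pp ^ x.2)
      = (∑ d' ∈ n'.divisors.filter (fun d => d < m'), Nat.totient d') * Nat.totient (pp ^ a) := by
    rw [Finset.sum_product, Finset.sum_mul]
    apply Finset.sum_congr rfl
    intro d' hd'
    rw [Finset.sum_singleton]
    exact htot d' (Nat.mem_divisors.1 (Finset.mem_filter.1 hd').1).1 a
  have hIH := IH m' hm'
  have htarget : Nat.totient (m' * pp ^ a) = Nat.totient m' * Nat.totient (pp ^ a) :=
    htot m' hm'dvd a
  rw [e1, e2, Finset.sum_union hdisj, e3, e4, htarget, Nat.sum_totient]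
  set S' := ∑ d' ∈ n'.divisors.filter (fun d => d < m'), Nat.totient d' with hS'
  rcases Nat.eq_zero_or_pos a with rfl | hapos
  · simp only [Finset.range_zero, Finset.sum_empty, Nat.mul_zero, Nat.zero_add,
      pow_zero, Nat.totient_one, Nat.mul_one]
    exact hIH
  · rw [hgeo a hapos]
    have hφpa : Nat.totient (pp ^ a) = pp ^ (a - 1) * (pp - 1) :=
      Nat.totient_prime_pow hp hapos
    have h1 : n' * pp ^ (a - 1) < Nat.totient (pp ^ a) := by
      rw [hφpa, mul_comm]
      exact (Nat.mul_lt_mul_left (pow_pos hpp0 _)).2 (by omega)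
    have h2 : S' + 1 ≤ Nat.totient m' := hIH
    calc n' * pp ^ (a - 1) + S' * Nat.totient (pp ^ a)
        < Nat.totient (pp ^ a) + S' * Nat.totient (pp ^ a) := by omega
      _ = (S' + 1) * Nat.totient (pp ^ a) := by ring
      _ ≤ Nat.totient m' * Nat.totient (pp ^ a) :=
          Nat.mul_le_mul_right _ h2

/-- For odd `n = p₁^{J₁} ⋯ p_s^{J_s}` with `∏_{i≤r} p_i^{J_i} < p_{r+1}`, sets of divisors
of `n` with equal totient sums `∑_{d∈D} φ(n/d)` coincide. -/
theorem totient_sum_inj_odd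
    (n s : ℕ) (p J : ℕ → ℕ)
    (hodd : Odd n) (hs : 2 ≤ s)
    (hp : ∀ i < s, (p i).Prime ∧ Odd (p i))
    (hJ : ∀ i < s, 1 ≤ J i)
    (hmono : ∀ i j, i < j → j < s → p i < p j)
    (hfact : n = ∏ i ∈ Finset.range s, p i ^ J i)
    (hsep : ∀ r, 1 ≤ r → r < s → ∏ i ∈ Finset.range r, p i ^ J i < p r)
    (D₁ D₂ : Finset ℕ)
    (hD₁ : D₁ ⊆ n.divisors) (hD₂ : D₂ ⊆ n.divisors)
    (hsum : ∑ d ∈ D₁, Nat.totient (n / d) = ∑ d ∈ D₂, Nat.totient (n / d)) :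
    D₁ = D₂ := by
  have hn0 : n ≠ 0 := by
    rcases hodd with ⟨k, hk⟩; omega
  -- partial products
  have hQodd : ∀ r, r ≤ s → Odd (∏ i ∈ Finset.range r, p i ^ J i) := by
    intro r hr
    apply Finset.prod_induction _ Odd (fun a b => Odd.mul) odd_one
    intro i hi
    have hi' : i < s := lt_of_lt_of_le (Finset.mem_range.1 hi) hr
    exact ((hp i hi').2).pow
  have hQpos : ∀ r, r ≤ s → 0 < ∏ i ∈ Finset.range r, p i ^ J i := by
    intro r hr
    rcases hQodd r hr with ⟨k, hk⟩; omega
  have hQlt : ∀ r, r < s → ∏ i ∈ Finset.range r, p i ^ J i < p r := by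
    intro r hr
    rcases Nat.eq_zero_or_pos r with rfl | hr1
    · simpa using (hp 0 (by omega)).1.one_lt
    · exact hsep r hr1 hr
  have good : ∀ r, r ≤ s → ∀ m ∈ (∏ i ∈ Finset.range r, p i ^ J i).divisors,
      ∑ d ∈ (∏ i ∈ Finset.range r, p i ^ J i).divisors.filter (fun d => d < m),
        Nat.totient d < Nat.totient m := by
    intro r
    induction r with
    | zero =>
      intro _ m hm
      simp only [Finset.range_zero, Finset.prod_empty] at hm ⊢
      rw [Nat.divisors_one] at hm ⊢
      simp only [Finset.mem_singleton] at hm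
      subst hm
      simp
    | succ k ih =>
      intro hk m hm
      have hk' : k ≤ s := by omega
      have hklt : k < s := by omega
      rw [Finset.prod_range_succ] at hm ⊢
      refine aux_good_step _ _ _ (hQpos k hk') (hp k hklt).1 ?_ (hJ k hklt) (ih hk') m hm
      have h1 := hQlt k hklt
      have h2 := hQodd k hk'
      have h3 := (hp k hklt).2
      rw [Nat.odd_iff] at h2 h3
      omega
  have goodn : ∀ m ∈ n.divisors,
      ∑ d ∈ n.divisors.filter (fun d => d < m), Nat.totient d < Nat.totient m := by
    rw [hfact]; exact good s le_rfl
  -- transfer to images under d ↦ n / d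
  have hdiv : ∀ d ∈ n.divisors, n / d ∈ n.divisors := by
    intro d hd
    have hdd : d ∣ n := (Nat.mem_divisors.1 hd).1
    exact Nat.mem_divisors.2 ⟨⟨d, (Nat.div_mul_cancel hdd).symm⟩, hn0⟩
  have hinj1 : ∀ x ∈ D₁, ∀ y ∈ D₁, n / x = n / y → x = y := by
    intro x hx y hy h
    have hx' := (Nat.mem_divisors.1 (hD₁ hx)).1
    have hy' := (Nat.mem_divisors.1 (hD₁ hy)).1
    rw [← Nat.div_div_self hx' hn0, ← Nat.div_div_self hy' hn0, h]
  have hinj2 : ∀ x ∈ D₂, ∀ y ∈ D₂, n / x = n / y → x = y := by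
    intro x hx y hy h
    have hx' := (Nat.mem_divisors.1 (hD₂ hx)).1
    have hy' := (Nat.mem_divisors.1 (hD₂ hy)).1
    rw [← Nat.div_div_self hx' hn0, ← Nat.div_div_self hy' hn0, h]
  have hsum1 : ∑ e ∈ D₁.image (fun d => n / d), Nat.totient e
      = ∑ d ∈ D₁, Nat.totient (n / d) := Finset.sum_image hinj1
  have hsum2 : ∑ e ∈ D₂.image (fun d => n / d), Nat.totient e
      = ∑ d ∈ D₂, Nat.totient (n / d) := Finset.sum_image hinj2
  have hE1 : D₁.image (fun d => n / d) ⊆ n.divisors := by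
    intro e he
    obtain ⟨d, hd, rfl⟩ := Finset.mem_image.1 he
    exact hdiv d (hD₁ hd)
  have hE2 : D₂.image (fun d => n / d) ⊆ n.divisors := by
    intro e he
    obtain ⟨d, hd, rfl⟩ := Finset.mem_image.1 he
    exact hdiv d (hD₂ hd)
  have hEeq : D₁.image (fun d => n / d) = D₂.image (fun d => n / d) :=
    aux_subset_sum_inj n.divisors Nat.totient goodn hE1 hE2
      (by rw [hsum1, hsum2]; exact hsum)
  -- recover D₁ = D₂
  have hback : ∀ D : Finset ℕ, D ⊆ n.divisors →
      (D.image (fun d => n / d)).image (fun d => n / d) = D := by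
    intro D hD
    rw [Finset.image_image]
    have : ∀ d ∈ D, (fun d => n / d) ((fun d => n / d) d) = d := by
      intro d hd
      exact Nat.div_div_self (Nat.mem_divisors.1 (hD hd)).1 hn0
    calc D.image ((fun d => n / d) ∘ (fun d => n / d))
        = D.image id := Finset.image_congr (fun d hd => this d hd)
      _ = D := Finset.image_id
  rw [← hback D₁ hD₁, ← hback D₂ hD₂, hEeq]
end

section
/- Let n be an even positive integer with prime factorization n = 2 p_1^{J_1} p_2^{J_2} ··· p_s^{J_s}, where s ≥ 2, p_1 < ··· < p_s are odd primes, each J_i ≥ 1, and for every r ∈ {1,...,s-1} one has ∏_{i=1}^{r} p_i^{J_i} < p_{r+1}. Let D_1 and D_2 be sets of divisors of n such that (1) ∑_{d | n, d odd, d ∈ D_1} φ(n/d) = ∑_{d | n, d odd, d ∈ D_2} φ(n/d), and (2) ∑_{d | n, d even, d ∈ D_1} φ(n/d) = ∑_{d | n, d even, d ∈ D_2} φ(n/d). Then D_1 = D_2. -/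
/-!
Write `n = 2M` with `M` odd. An odd divisor `d` of `n` divides `M` and `φ(n/d) = φ(M/d)`, while
an even divisor `d = 2e` has `n/d = M/e`; so each hypothesis equates two subset sums of the family
`(φ c)_{c ∣ M}`, indexed injectively by `d`. A superincreasing family (each member
exceeds the sum of the smaller ones) has injective subset sums: look at the largest element of the
symmetric difference.

The separation condition makes `φ` superincreasing on the divisors of `M`. Inductively, pass from
`m` to `m q^K` with `m + 1 < q`: a divisor of `m q^K` below `e q^k` (`e ∣ m`) is either below
`q^k`, hence a divisor of `m q^(k-1)`, and these contribute at most `m q^(k-1) < φ(q^k)`; or it is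
`e' q^k` with `e' < e`, and these contribute `φ(q^k)` times a sum smaller than `φ e`.
-/

open Finset
open scoped Nat

section Superincreasing

variable {α β M : Type*} [LinearOrder α] [AddCommMonoid M] [PartialOrder M]
  [CanonicallyOrderedAdd M]

def Superincreasing (T : Finset α) (v : α → M) : Prop :=
  ∀ t ∈ T, ∑ u ∈ T with u < t, v u < v t

theorem Superincreasing.mono {T T' : Finset α} {v : α → M} (hT : Superincreasing T v)
    (h : T' ⊆ T) : Superincreasing T' v :=
  fun t ht => (sum_le_sum_of_subset (filter_subset_filter _ h)).trans_lt (hT t (h ht))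

theorem Superincreasing.eq_of_sum_eq [IsOrderedCancelAddMonoid M] {T : Finset α} {v : α → M}
    (hT : Superincreasing T v) {A B : Finset α} (hA : A ⊆ T) (hB : B ⊆ T)
    (h : ∑ a ∈ A, v a = ∑ b ∈ B, v b) : A = B := by
  classical
  induction T using Finset.induction_on_max generalizing A B with
  | empty => rw [subset_empty.1 hA, subset_empty.1 hB]
  | insert t T hlt ih =>
    have sum_lt_of_notMem : ∀ C ⊆ insert t T, t ∉ C → ∑ c ∈ C, v c < v t :=
      fun C hC htC =>
      calc ∑ c ∈ C, v c ≤ ∑ u ∈ insert t T with u < t, v u :=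
            sum_le_sum_of_subset fun c hc => mem_filter.2 ⟨hC hc,
              hlt c ((mem_insert.1 (hC hc)).resolve_left (ne_of_mem_of_not_mem hc htC))⟩
        _ < v t := hT t (mem_insert_self t T)
    have sum_lt : ∀ C ⊆ insert t T, ∀ D ⊆ insert t T, t ∈ C → t ∉ D →
        ∑ d ∈ D, v d < ∑ c ∈ C, v c := fun C _ D hD htC htD =>
      (sum_lt_of_notMem D hD htD).trans_le (single_le_sum (fun _ _ => zero_le) htC)
    have hT' := hT.mono (subset_insert t T)
    by_cases htA : t ∈ A <;> by_cases htB : t ∈ B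
    · rw [← insert_erase htA, ← insert_erase htB, sum_insert (notMem_erase t A),
        sum_insert (notMem_erase t B)] at h
      rw [← insert_erase htA, ← insert_erase htB,
        ih hT' (subset_insert_iff.1 hA) (subset_insert_iff.1 hB) (add_left_cancel h)]
    · exact absurd h (sum_lt A hA B hB htA htB).ne'
    · exact absurd h (sum_lt B hB A hA htB htA).ne
    · exact ih hT' ((subset_insert_iff_of_notMem htA).1 hA)
        ((subset_insert_iff_of_notMem htB).1 hB) h

theorem Superincreasing.eq_of_sum_comp_eq [IsOrderedCancelAddMonoid M] {S : Finset α}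
    {w : α → M} (hS : Superincreasing S w) {T A B : Finset β} {f : β → α}
    (hf : Set.InjOn f T) (hfT : ∀ b ∈ T, f b ∈ S) (hA : A ⊆ T) (hB : B ⊆ T)
    (h : ∑ a ∈ A, w (f a) = ∑ b ∈ B, w (f b)) : A = B := by
  classical
  have image_subset : ∀ C ⊆ T, C.image f ⊆ S := fun C hC =>
    image_subset_iff.2 fun c hc => hfT c (hC hc)
  rw [← image_eq_image_iff_of_injOn hf hA hB]
  refine hS.eq_of_sum_eq (image_subset A hA) (image_subset B hB) ?_
  rwa [sum_image (hf.mono (coe_subset.2 hA)), sum_image (hf.mono (coe_subset.2 hB))]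

end Superincreasing

namespace Nat

variable {m q : ℕ}

theorem exists_mul_pow_eq_of_dvd_mul_prime_pow (hq : q.Prime) {c K : ℕ} (h : c ∣ m * q ^ K) :
    ∃ e, e ∣ m ∧ ∃ k ≤ K, e * q ^ k = c := by
  obtain ⟨e, _, he, hz, rfl⟩ := Nat.dvd_mul.1 h
  obtain ⟨k, hk, rfl⟩ := (Nat.dvd_prime_pow hq).1 hz
  exact ⟨e, he, k, hk, rfl⟩

theorem mul_pow_lt_pow_succ {e : ℕ} (he : e < q) (k : ℕ) : e * q ^ k < q ^ (k + 1) := by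
  rw [pow_succ']
  exact Nat.mul_lt_mul_of_pos_right he (pow_pos (by omega) k)

theorem sum_totient_divisors_mul_prime_pow_lt_pow (hq : q.Prime) (hm0 : m ≠ 0)
    (hmq : m + 1 < q) (K k : ℕ) :
    ∑ c ∈ (m * q ^ K).divisors with c < q ^ k, φ c < φ (q ^ k) := by
  cases k with
  | zero => simp
  | succ j =>
    calc ∑ c ∈ (m * q ^ K).divisors with c < q ^ (j + 1), φ c
        ≤ ∑ c ∈ (m * q ^ j).divisors, φ c := by
          refine sum_le_sum_of_subset fun c hc => ?_
          obtain ⟨hc, hlt⟩ := mem_filter.1 hc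
          obtain ⟨e, he, k, -, rfl⟩ :=
            exists_mul_pow_eq_of_dvd_mul_prime_pow hq (dvd_of_mem_divisors hc)
          have he0 : 0 < e := pos_of_dvd_of_pos he (pos_of_ne_zero hm0)
          have hkj : k ≤ j := by
            have := (Nat.le_mul_of_pos_left (q ^ k) he0).trans_lt hlt
            exact Nat.lt_succ_iff.1 ((Nat.pow_lt_pow_iff_right hq.one_lt).1 this)
          exact mem_divisors.2
            ⟨mul_dvd_mul he (pow_dvd_pow q hkj), mul_ne_zero hm0 (pow_ne_zero j hq.ne_zero)⟩
      _ = m * q ^ j := sum_totient _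
      _ < q ^ j * (q - 1) := by
          rw [mul_comm]; exact Nat.mul_lt_mul_of_pos_left (by omega) (pow_pos hq.pos j)
      _ = φ (q ^ (j + 1)) := (totient_prime_pow_succ hq j).symm

theorem filter_divisors_mul_prime_pow_lt_subset (hq : q.Prime) (hm0 : m ≠ 0) (hmq : m < q)
    {e k K : ℕ} (he : e ∣ m) :
    {c ∈ (m * q ^ K).divisors | c < e * q ^ k} ⊆
      {c ∈ (m * q ^ K).divisors | c < q ^ k} ∪
        {e' ∈ m.divisors | e' < e}.image (· * q ^ k) := by
  intro c hc
  obtain ⟨hc, hlt⟩ := mem_filter.1 hc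
  obtain ⟨e', he', k', -, rfl⟩ :=
    exists_mul_pow_eq_of_dvd_mul_prime_pow hq (dvd_of_mem_divisors hc)
  have hltq : ∀ {x}, x ∣ m → x < q := fun hx =>
    (le_of_dvd (pos_of_ne_zero hm0) hx).trans_lt hmq
  rcases lt_trichotomy k' k with h | rfl | h
  · exact mem_union_left _ <| mem_filter.2
      ⟨hc, (mul_pow_lt_pow_succ (hltq he') k').trans_le (Nat.pow_le_pow_right hq.pos h)⟩
  · exact mem_union_right _ <| mem_image.2
      ⟨e', mem_filter.2 ⟨mem_divisors.2 ⟨he', hm0⟩, Nat.lt_of_mul_lt_mul_right hlt⟩,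
        rfl⟩
  · have he'0 : 0 < e' := pos_of_dvd_of_pos he' (pos_of_ne_zero hm0)
    have := calc e * q ^ k < q ^ (k + 1) := mul_pow_lt_pow_succ (hltq he) k
      _ ≤ q ^ k' := Nat.pow_le_pow_right hq.pos h
      _ ≤ e' * q ^ k' := Nat.le_mul_of_pos_left _ he'0
    omega

end Nat

theorem Superincreasing.totient_divisors_mul_prime_pow {m q : ℕ}
    (hm : Superincreasing m.divisors φ) (hq : q.Prime) (hmq : m + 1 < q) (K : ℕ) :
    Superincreasing (m * q ^ K).divisors φ := by
  rcases eq_or_ne m 0 with rfl | hm0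
  · simp [Superincreasing]
  intro d hd
  obtain ⟨e, he, k, -, rfl⟩ :=
    Nat.exists_mul_pow_eq_of_dvd_mul_prime_pow hq (Nat.dvd_of_mem_divisors hd)
  have hcop : ∀ {e'}, e' ∣ m → e'.Coprime (q ^ k) := fun he' =>
    ((Nat.coprime_of_lt_prime hm0 (by omega) hq).symm.coprime_dvd_left he').pow_right k
  set S := ∑ e' ∈ m.divisors with e' < e, φ e'
  have hS : S < φ e := hm e (Nat.mem_divisors.2 ⟨he, hm0⟩)
  have himage :
      ∑ c ∈ {e' ∈ m.divisors | e' < e}.image (· * q ^ k), φ c = S * φ (q ^ k) := by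
    rw [sum_image fun x _ y _ h => Nat.eq_of_mul_eq_mul_right (pow_pos hq.pos k) h, sum_mul]
    exact sum_congr rfl fun e' he' =>
      Nat.totient_mul (hcop (Nat.dvd_of_mem_divisors (mem_filter.1 he').1))
  calc ∑ c ∈ (m * q ^ K).divisors with c < e * q ^ k, φ c
      ≤ ∑ c ∈ {c ∈ (m * q ^ K).divisors | c < q ^ k} ∪
          {e' ∈ m.divisors | e' < e}.image (· * q ^ k), φ c :=
        sum_le_sum_of_subset (Nat.filter_divisors_mul_prime_pow_lt_subset hq hm0 (by omega) he)
    _ ≤ ∑ c ∈ (m * q ^ K).divisors with c < q ^ k, φ c + S * φ (q ^ k) :=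
        himage ▸ (Nat.le_add_right _ _).trans sum_union_inter.le
    _ < φ (q ^ k) + S * φ (q ^ k) := by
        gcongr; exact Nat.sum_totient_divisors_mul_prime_pow_lt_pow hq hm0 hmq K k
    _ = (S + 1) * φ (q ^ k) := by ring
    _ ≤ φ e * φ (q ^ k) := by gcongr; exact hS
    _ = φ (e * q ^ k) := (Nat.totient_mul (hcop he)).symm

theorem odd_prod_range_pow {s : ℕ} {p J : ℕ → ℕ} (hp : ∀ i < s, Odd (p i)) :
    Odd (∏ i ∈ range s, p i ^ J i) :=
  prod_induction _ Odd (fun _ _ => Odd.mul) odd_one fun i hi => (hp i (mem_range.1 hi)).pow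

theorem superincreasing_totient_divisors_prod {s : ℕ} {p J : ℕ → ℕ}
    (hp : ∀ i < s, (p i).Prime ∧ Odd (p i))
    (hsep : ∀ r, 1 ≤ r → r < s → ∏ i ∈ range r, p i ^ J i < p r) :
    Superincreasing (∏ i ∈ range s, p i ^ J i).divisors φ := by
  induction s with
  | zero => simp [Superincreasing]
  | succ s ih =>
    obtain ⟨hq, b, hb⟩ := hp s s.lt_succ_self
    obtain ⟨a, ha⟩ : Odd (∏ i ∈ range s, p i ^ J i) :=
      odd_prod_range_pow fun i hi => (hp i (by omega)).2
    have hlt : ∏ i ∈ range s, p i ^ J i < p s := by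
      rcases Nat.eq_zero_or_pos s with rfl | hs
      · simpa using hq.one_lt
      · exact hsep s hs s.lt_succ_self
    rw [prod_range_succ]
    exact (ih (fun i hi => hp i (by omega)) fun r h1 h2 => hsep r h1 (by omega))
      |>.totient_divisors_mul_prime_pow hq (by omega) _

namespace Nat

theorem injOn_div_divisors (n : ℕ) : Set.InjOn (n / ·) n.divisors := fun _ ha _ hb h =>
  (div_eq_iff_eq_of_dvd_dvd (mem_divisors.1 ha).2 (dvd_of_mem_divisors ha)
    (dvd_of_mem_divisors hb)).1 h

theorem div_mem_divisors {n d : ℕ} (hd : d ∈ n.divisors) : n / d ∈ n.divisors :=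
  mem_divisors.2 ⟨div_dvd_of_dvd (dvd_of_mem_divisors hd), (mem_divisors.1 hd).2⟩

variable {m d : ℕ}

theorem mem_divisors_of_mem_divisors_two_mul_of_odd (hd : d ∈ (2 * m).divisors) (hodd : Odd d) :
    d ∈ m.divisors :=
  mem_divisors.2 ⟨hodd.coprime_two_right.dvd_of_dvd_mul_left (dvd_of_mem_divisors hd),
    right_ne_zero_of_mul (mem_divisors.1 hd).2⟩

theorem two_mul_div_mem_divisors_of_even (hd : d ∈ (2 * m).divisors) (heven : Even d) :
    2 * m / d ∈ m.divisors := by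
  obtain ⟨hdvd, hm⟩ := mem_divisors.1 hd
  obtain ⟨e, rfl⟩ := heven.two_dvd
  rw [Nat.mul_div_mul_left _ _ two_pos]
  exact div_mem_divisors
    (mem_divisors.2 ⟨(mul_dvd_mul_iff_left two_ne_zero).1 hdvd, right_ne_zero_of_mul hm⟩)

theorem totient_two_mul_div_of_odd (hm : Odd m) (hd : d ∣ m) : φ (2 * m / d) = φ (m / d) := by
  rw [Nat.mul_div_assoc 2 hd, totient_two_mul_of_odd (hm.of_dvd_nat (div_dvd_of_dvd hd))]

end Nat

theorem totient_sum_inj_even_general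
    (n s : ℕ) (p J : ℕ → ℕ)
    (hp : ∀ i < s, (p i).Prime ∧ Odd (p i))
    (hfact : n = 2 * ∏ i ∈ Finset.range s, p i ^ J i)
    (hsep : ∀ r, 1 ≤ r → r < s → ∏ i ∈ Finset.range r, p i ^ J i < p r)
    (D₁ D₂ : Finset ℕ)
    (hD₁ : D₁ ⊆ n.divisors) (hD₂ : D₂ ⊆ n.divisors)
    (hoddsum : ∑ d ∈ D₁.filter (fun d => Odd d), Nat.totient (n / d)
        = ∑ d ∈ D₂.filter (fun d => Odd d), Nat.totient (n / d))
    (hevensum : ∑ d ∈ D₁.filter (fun d => Even d), Nat.totient (n / d)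
        = ∑ d ∈ D₂.filter (fun d => Even d), Nat.totient (n / d)) :
    D₁ = D₂ := by
  set M := ∏ i ∈ Finset.range s, p i ^ J i
  have hM : Odd M := odd_prod_range_pow fun i hi => (hp i hi).2
  have hsup : Superincreasing M.divisors φ := superincreasing_totient_divisors_prod hp hsep
  subst hfact
  have hodd_sub : ∀ D ⊆ (2 * M).divisors, {d ∈ D | Odd d} ⊆ M.divisors := fun D hD d hd =>
    Nat.mem_divisors_of_mem_divisors_two_mul_of_odd (hD (mem_filter.1 hd).1) (mem_filter.1 hd).2
  have hodd_sum : ∀ D ⊆ (2 * M).divisors,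
      ∑ d ∈ D with Odd d, φ (2 * M / d) = ∑ d ∈ D with Odd d, φ (M / d) := fun D hD =>
    sum_congr rfl fun d hd =>
      Nat.totient_two_mul_div_of_odd hM (Nat.dvd_of_mem_divisors (hodd_sub D hD hd))
  have hodd : {d ∈ D₁ | Odd d} = {d ∈ D₂ | Odd d} := by
    refine hsup.eq_of_sum_comp_eq (Nat.injOn_div_divisors M) (fun _ => Nat.div_mem_divisors)
      (hodd_sub D₁ hD₁) (hodd_sub D₂ hD₂) ?_
    rwa [hodd_sum D₁ hD₁, hodd_sum D₂ hD₂] at hoddsum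
  have heven : {d ∈ D₁ | Even d} = {d ∈ D₂ | Even d} :=
    hsup.eq_of_sum_comp_eq ((Nat.injOn_div_divisors _).mono (coe_subset.2 (filter_subset _ _)))
      (fun d hd => Nat.two_mul_div_mem_divisors_of_even (mem_filter.1 hd).1 (mem_filter.1 hd).2)
      (filter_subset_filter _ hD₁) (filter_subset_filter _ hD₂) hevensum
  ext d
  rcases Nat.even_or_odd d with h | h
  · simpa [h] using congr(d ∈ $heven)
  · simpa [h] using congr(d ∈ $hodd)

/-- For even `n = 2 p₁^{J₁} ⋯ p_s^{J_s}` with `∏_{i≤r} p_i^{J_i} < p_{r+1}`, sets of divisors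
of `n` having equal odd-divisor and equal even-divisor totient sums coincide. -/
theorem totient_sum_inj_even
    (n s : ℕ) (p J : ℕ → ℕ)
    (heven : Even n) (hs : 2 ≤ s)
    (hp : ∀ i < s, (p i).Prime ∧ Odd (p i))
    (hJ : ∀ i < s, 1 ≤ J i)
    (hmono : ∀ i j, i < j → j < s → p i < p j)
    (hfact : n = 2 * ∏ i ∈ Finset.range s, p i ^ J i)
    (hsep : ∀ r, 1 ≤ r → r < s → ∏ i ∈ Finset.range r, p i ^ J i < p r)
    (D₁ D₂ : Finset ℕ)
    (hD₁ : D₁ ⊆ n.divisors) (hD₂ : D₂ ⊆ n.divisors)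
    (hoddsum : ∑ d ∈ D₁.filter (fun d => Odd d), Nat.totient (n / d)
        = ∑ d ∈ D₂.filter (fun d => Odd d), Nat.totient (n / d))
    (hevensum : ∑ d ∈ D₁.filter (fun d => Even d), Nat.totient (n / d)
        = ∑ d ∈ D₂.filter (fun d => Even d), Nat.totient (n / d)) :
    D₁ = D₂ :=
  totient_sum_inj_even_general n s p J hp hfact hsep D₁ D₂ hD₁ hD₂ hoddsum hevensum
end

section
/- Let n be a positive integer with φ(n) ≥ n/2, where φ is Euler's totient function. Let D_1 and D_2 be sets of divisors of n with n ∉ D_1 and n ∉ D_2. If the integral circulant graphs ICG(n,D_1) and ICG(n,D_2) are isospectral, then 1 does not belong to the symmetric difference D_1 △ D_2. -/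
open Finset

lemma rootSum (n : ℕ) (hn : 0 < n) (m : ℕ) :
    ∑ k ∈ Icc 1 n, omegaN n ^ (k * m) = if n ∣ m then (n : ℂ) else 0 := by
  have hζ : IsPrimitiveRoot (omegaN n) n := Complex.isPrimitiveRoot_exp n hn.ne'
  have hterm : ∀ k, omegaN n ^ (k * m) = (omegaN n ^ m) ^ k := fun k => by
    rw [← pow_mul, mul_comm]
  rw [Finset.sum_congr rfl (fun k _ => hterm k)]
  set x := omegaN n ^ m with hx
  by_cases h : n ∣ m
  · rw [if_pos h]
    have hx1 : x = 1 := (hζ.pow_eq_one_iff_dvd m).2 h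
    simp [hx1, Nat.card_Icc]
  · rw [if_neg h]
    have hx1 : x ≠ 1 := fun hc => h ((hζ.pow_eq_one_iff_dvd m).1 hc)
    have hxn : x ^ n = 1 := by
      rw [hx, ← pow_mul, mul_comm, pow_mul, hζ.pow_eq_one, one_pow]
    have hrange : ∑ k ∈ range n, x ^ k = 0 := by
      have hg := geom_sum_mul x n
      rw [hxn, sub_self] at hg
      exact (mul_eq_zero.1 hg).resolve_right (sub_ne_zero.2 hx1)
    calc ∑ k ∈ Icc 1 n, x ^ k = ∑ i ∈ range n, x ^ (1 + i) := by
          rw [← Finset.Ico_add_one_right_eq_Icc, Finset.sum_Ico_eq_sum_range]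
          simp
      _ = x * ∑ i ∈ range n, x ^ i := by
          simp [pow_add, Finset.mul_sum]
      _ = 0 := by rw [hrange, mul_zero]

lemma star_omega_pow (n : ℕ) (hn : 0 < n) (t : ℕ) :
    star (omegaN n ^ t) = omegaN n ^ ((n - 1) * t) := by
  have hζ : IsPrimitiveRoot (omegaN n) n := Complex.isPrimitiveRoot_exp n hn.ne'
  have habs : ‖omegaN n‖ = 1 := Complex.norm_eq_one_of_pow_eq_one hζ.pow_eq_one hn.ne'
  have hconj : star (omegaN n) = (omegaN n)⁻¹ := (Complex.inv_eq_conj habs).symm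
  have hsplit : omegaN n * omegaN n ^ (n - 1) = omegaN n ^ n := by
    rw [← pow_succ']
    congr 1
    omega
  have hinv : (omegaN n)⁻¹ = omegaN n ^ (n - 1) :=
    inv_eq_of_mul_eq_one_right (by rw [hsplit, hζ.pow_eq_one])
  rw [star_pow, hconj, hinv, ← pow_mul]

lemma dvd_iff_eq (n g h : ℕ) (hn : 0 < n) (hg : g ∈ Icc 1 n) (hh : h ∈ Icc 1 n) :
    n ∣ g + (n - 1) * h ↔ g = h := by
  simp only [mem_Icc] at hg hh
  constructor
  · intro hd
    have h1 : (n : ℤ) ∣ ((g + (n - 1) * h : ℕ) : ℤ) := Int.natCast_dvd_natCast.2 hd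
    have hcast : ((g + (n - 1) * h : ℕ) : ℤ) = ((g : ℤ) - h) + (n : ℤ) * h := by
      push_cast [Nat.cast_sub hn]
      ring
    rw [hcast] at h1
    have h2 : (n : ℤ) ∣ (g : ℤ) - h := by
      have := dvd_sub h1 (dvd_mul_right (n : ℤ) (h : ℤ))
      simpa using this
    have h3 : ((g : ℤ) - h) = 0 := by
      refine Int.eq_zero_of_abs_lt_dvd h2 ?_
      rw [abs_lt]
      omega
    omega
  · rintro rfl
    refine ⟨g, ?_⟩
    calc g + (n - 1) * g = (1 + (n - 1)) * g := by ring
      _ = n * g := by rw [Nat.add_sub_cancel' hn]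

lemma sumNormSq (n : ℕ) (hn : 0 < n) (S : Finset ℕ) (hS : S ⊆ Icc 1 n) :
    ((spec n S).map fun z => z * star z).sum = (n : ℂ) * S.card := by
  have hstep : ((spec n S).map fun z => z * star z).sum
      = ∑ k ∈ Icc 1 n, lam n S k * star (lam n S k) := by
    rw [spec, Multiset.map_map]
    rfl
  rw [hstep]
  have hterm : ∀ k ∈ Icc 1 n, lam n S k * star (lam n S k)
      = ∑ g ∈ S, ∑ h ∈ S, omegaN n ^ (k * (g + (n - 1) * h)) := by
    intro k _
    rw [lam, star_sum, Finset.sum_mul_sum]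
    refine Finset.sum_congr rfl fun g _ => Finset.sum_congr rfl fun h _ => ?_
    rw [star_omega_pow n hn, ← pow_add]
    congr 1
    ring
  rw [Finset.sum_congr rfl hterm, Finset.sum_comm]
  have hinner : ∀ g ∈ S, ∑ k ∈ Icc 1 n, ∑ h ∈ S, omegaN n ^ (k * (g + (n - 1) * h))
      = (n : ℂ) := by
    intro g hg
    rw [Finset.sum_comm]
    have : ∀ h ∈ S, ∑ k ∈ Icc 1 n, omegaN n ^ (k * (g + (n - 1) * h))
        = if g = h then (n : ℂ) else 0 := by
      intro h hh
      rw [rootSum n hn]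
      congr 1
      exact propext (dvd_iff_eq n g h hn (hS hg) (hS hh))
    rw [Finset.sum_congr rfl this, Finset.sum_ite_eq S g fun _ => (n : ℂ), if_pos hg]
  rw [Finset.sum_congr rfl hinner, Finset.sum_const, nsmul_eq_mul, mul_comm]

lemma totient_filter (n : ℕ) (hn2 : 2 ≤ n) :
    ((Icc 1 n).filter fun j => Nat.gcd j n = 1).card = n.totient := by
  rw [Nat.totient_eq_card_coprime]
  congr 1
  ext j
  simp only [mem_filter, mem_Icc, mem_range, Nat.Coprime]
  constructor
  · rintro ⟨⟨hj1, hj2⟩, hj3⟩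
    refine ⟨lt_of_le_of_ne hj2 ?_, by rwa [Nat.gcd_comm]⟩
    rintro rfl
    rw [Nat.gcd_self] at hj3
    omega
  · rintro ⟨hj1, hj2⟩
    rw [Nat.gcd_comm] at hj2
    refine ⟨⟨?_, hj1.le⟩, hj2⟩
    rcases Nat.eq_zero_or_pos j with rfl | hpos
    · rw [Nat.gcd_zero_left] at hj2; omega
    · exact hpos

lemma auxFalse (n : ℕ) (hn2 : 2 ≤ n) (hphiN : n ≤ 2 * n.totient)
    (D₁ D₂ : Finset ℕ) (hn₂ : n ∉ D₂) (h1 : 1 ∈ D₁) (h2 : 1 ∉ D₂)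
    (hcard : (connSet n D₁).card = (connSet n D₂).card) : False := by
  have e1 := totient_filter n hn2
  -- lower bound
  have hsub1 : (Icc 1 n).filter (fun j => Nat.gcd j n = 1) ⊆ connSet n D₁ := by
    intro j hj
    simp only [mem_filter] at hj
    simp only [connSet, mem_filter]
    exact ⟨hj.1, hj.2 ▸ h1⟩
  have low : n.totient ≤ (connSet n D₁).card := e1 ▸ Finset.card_le_card hsub1
  -- upper bound
  set T : Finset ℕ := insert n ((Icc 1 n).filter fun j => Nat.gcd j n = 1) with hT
  have hTsub : T ⊆ Icc 1 n :=
    insert_subset (mem_Icc.2 ⟨by omega, le_rfl⟩) (filter_subset _ _)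
  have hnotmem : n ∉ (Icc 1 n).filter fun j => Nat.gcd j n = 1 := by
    simp only [mem_filter, mem_Icc, Nat.gcd_self]
    omega
  have hTcard : T.card = n.totient + 1 := by
    rw [hT, Finset.card_insert_of_notMem hnotmem, e1]
  have hsub2 : connSet n D₂ ⊆ Icc 1 n \ T := by
    intro j hj
    simp only [connSet, mem_filter] at hj
    rw [mem_sdiff]
    refine ⟨hj.1, ?_⟩
    simp only [hT, mem_insert, mem_filter]
    rintro (rfl | ⟨-, hgcd⟩)
    · rw [Nat.gcd_self] at hj; exact hn₂ hj.2
    · rw [hgcd] at hj; exact h2 hj.2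
  have up : (connSet n D₂).card ≤ n - (n.totient + 1) := by
    calc (connSet n D₂).card ≤ (Icc 1 n \ T).card := Finset.card_le_card hsub2
      _ = n - (n.totient + 1) := by
          rw [Finset.card_sdiff_of_subset hTsub, hTcard, Nat.card_Icc]
          omega
  omega

/-- If `φ(n) ≥ n/2` and the integral circulant graphs are isospectral, then `1` does not lie
in the symmetric difference of the divisor sets. -/
theorem one_not_mem_symmDiff
    (n : ℕ) (hn : 0 < n) (hphi : (n : ℝ) / 2 ≤ (Nat.totient n : ℝ))
    (D₁ D₂ : Finset ℕ)
    (hD₁ : D₁ ⊆ n.divisors) (hD₂ : D₂ ⊆ n.divisors)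
    (hn₁ : n ∉ D₁) (hn₂ : n ∉ D₂)
    (hspec : spec n (connSet n D₁) = spec n (connSet n D₂)) :
    1 ∉ (D₁ \ D₂) ∪ (D₂ \ D₁) := by
  intro hmem
  have hphiN : n ≤ 2 * n.totient := by
    have h' : (n : ℝ) ≤ 2 * (n.totient : ℝ) := by linarith
    exact_mod_cast h'
  have hcard : (connSet n D₁).card = (connSet n D₂).card := by
    have heq : (n : ℂ) * (connSet n D₁).card = (n : ℂ) * (connSet n D₂).card := by
      rw [← sumNormSq n hn (connSet n D₁) (filter_subset _ _),
        ← sumNormSq n hn (connSet n D₂) (filter_subset _ _), hspec]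
    have hne : (n : ℂ) ≠ 0 := Nat.cast_ne_zero.2 hn.ne'
    exact_mod_cast mul_left_cancel₀ hne heq
  rw [Finset.mem_union, Finset.mem_sdiff, Finset.mem_sdiff] at hmem
  rcases hmem with ⟨h1, h2⟩ | ⟨h1, h2⟩
  · have hn2 : 2 ≤ n := by
      by_contra hlt
      have hone : n = 1 := by omega
      subst hone
      exact hn₁ h1
    exact auxFalse n hn2 hphiN D₁ D₂ hn₂ h1 h2 hcard
  · have hn2 : 2 ≤ n := by
      by_contra hlt
      have hone : n = 1 := by omega
      subst hone
      exact hn₂ h1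
    exact auxFalse n hn2 hphiN D₂ D₁ hn₁ h1 h2 hcard.symm
end
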